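/- arXiv:2207.06158 — 9 statements merged into one kernel-verified Lean document; each statement's English description precedes it below -/
import Mathlib

section
/- For every N ≥ 1, every boundary value b ∈ X and every initial condition a ∈ X^ℕ, the unit-time flow map of the regularized system satisfies φ_b^(N)(a) = ψ^(N)(ψ^(N)(a)) + β_b(a), where the sum is taken pointwise in X^ℕ. -/
open Filter Topology

namespace SSRG

variable {X : Type*}

/-- Upward shift map `σ₊(a) = (a₂, a₃, …)`. -/
def sigPlus (a : ℕ → X) : ℕ → X := fun i => a (i + 1)

/-- Downward shift map `σ₋(a) = (0, a₁, a₂, …)`. -/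
def sigMinus [Zero X] (a : ℕ → X) : ℕ → X := fun i =>
  match i with
  | 0 => 0
  | j + 1 => a j

/-- Coupling map `ξ(a) = (f(a₁,a₂), g(a₁,a₂), 0, 0, …)`. -/
def xiMap [Zero X] (f g : X → X → X) (a : ℕ → X) : ℕ → X := fun i =>
  match i with
  | 0 => f (a 0) (a 1)
  | 1 => g (a 0) (a 1)
  | _ + 2 => 0

/-- Boundary coupling map `β_b(a) = (g(b,a₁), 0, 0, …)`. -/
def betaMap [Zero X] (g : X → X → X) (b : X) (a : ℕ → X) : ℕ → X := fun i =>
  match i with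
  | 0 => g b (a 0)
  | _ + 1 => 0

/-- The renormalization group operator `R_g[ψ] = σ₋ ∘ ψ ∘ ψ ∘ σ₊ + ξ`. -/
def RGop [AddCommMonoid X] (f g : X → X → X) (ψ : (ℕ → X) → (ℕ → X)) :
    (ℕ → X) → (ℕ → X) :=
  fun a => sigMinus (ψ (ψ (sigPlus a))) + xiMap f g a

/-- The ideal equation at scale `n ≥ 1` and time `t = m·2⁻ⁿ`, `m ≥ 1`.
A field `u : ℕ → ℕ → X` records `u n m = uₙ(m·τₙ)`; row `0` is the boundary row,
`u 0 t = b_t` at integer times `t`. -/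
def IdealEq [AddCommMonoid X] (f g : X → X → X) (u : ℕ → ℕ → X) (n m : ℕ) : Prop :=
  if m % 2 = 1 then
    u n m = f (u n (m - 1)) (u (n + 1) (2 * (m - 1)))
  else
    u n m = f (u n (m - 1)) (u (n + 1) (2 * (m - 1))) +
      g (u (n - 1) ((m - 2) / 2)) (u n (m - 2))

/-- The regularized solution at regularization scale number `N`, with initial
conditions `a` (so `uₙ(0) = aₙ = a (n-1)` for `1 ≤ n ≤ N`) and boundary conditions
`b` (`u₀(t) = b t`): all variables at scales `n > N` vanish and the ideal equations
hold for `1 ≤ n ≤ N`. -/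
def IsRegSol [AddCommMonoid X] (f g : X → X → X) (N : ℕ) (a b : ℕ → X)
    (u : ℕ → ℕ → X) : Prop :=
  (∀ m, u 0 m = b m) ∧
  (∀ n, 1 ≤ n → n ≤ N → u n 0 = a (n - 1)) ∧
  (∀ n, N < n → ∀ m, u n m = 0) ∧
  (∀ n m, 1 ≤ n → n ≤ N → 1 ≤ m → IdealEq f g u n m)

/-- The state `u(1/2) = (u₁(1/2), u₂(1/2), …)` of a field. -/
def halfState (u : ℕ → ℕ → X) : ℕ → X := fun i => u (i + 1) (2 ^ i)

/-- The state `u(1) = (u₁(1), u₂(1), …)` of a field. -/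
def unitState (u : ℕ → ℕ → X) : ℕ → X := fun i => u (i + 1) (2 ^ (i + 1))

/-- The state `u(t) = (u₁(t), u₂(t), …)` of a field at an integer time `t`. -/
def intState (u : ℕ → ℕ → X) (t : ℕ) : ℕ → X := fun i => u (i + 1) (t * 2 ^ (i + 1))

/-- A weak solution of the ideal system: initial conditions `a`, boundary
conditions `b`, and the ideal equations at all points of the lattice. -/
def IsWeakSol [AddCommMonoid X] (f g : X → X → X) (a b : ℕ → X) (u : ℕ → ℕ → X) : Prop :=
  (∀ m, u 0 m = b m) ∧
  (∀ n, 1 ≤ n → u n 0 = a (n - 1)) ∧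
  (∀ n m, 1 ≤ n → 1 ≤ m → IdealEq f g u n m)

/-- Convergence of maps: `ψ N (a_N) → ψ∞ a` for every convergent sequence `a_N → a`
in `X^ℕ` with the product topology. -/
def MapConv [TopologicalSpace X] (ψ : ℕ → (ℕ → X) → (ℕ → X))
    (ψinf : (ℕ → X) → (ℕ → X)) : Prop :=
  ∀ (aN : ℕ → ℕ → X) (a : ℕ → X), Tendsto aN atTop (𝓝 a) →
    Tendsto (fun N => ψ N (aN N)) atTop (𝓝 (ψinf a))

/-- For every `N ≥ 1`, boundary value `b₀ = b 0 ∈ X` and initial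
condition `a ∈ X^ℕ`, the unit-time flow map of the regularized system satisfies
`φ_{b₀}^{(N)}(a) = ψ^{(N)}(ψ^{(N)}(a)) + β_{b₀}(a)`.  Here `u` is the regularized
solution with data `(a, b)`, so that `φ_{b₀}^{(N)}(a) = u^{(N)}(1)` and
`ψ^{(N)}(a) = u^{(N)}(1/2)`, and `v` is the regularized solution started from
`ψ^{(N)}(a)` (with arbitrary boundary conditions `b'`, on which the half-time map
does not depend), so that `ψ^{(N)}(ψ^{(N)}(a)) = v^{(N)}(1/2)`. -/
theorem statement0 {X : Type*} [MetricSpace X] [CompleteSpace X]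
    [TopologicalSpace.SeparableSpace X] [AddCommMonoid X] [ContinuousAdd X]
    (f g : X → X → X) (hf : Continuous fun p : X × X => f p.1 p.2)
    (hg : Continuous fun p : X × X => g p.1 p.2)
    (N : ℕ) (hN : 1 ≤ N) (a b b' : ℕ → X) (u v : ℕ → ℕ → X)
    (hu : IsRegSol f g N a b u)
    (hv : IsRegSol f g N (halfState u) b' v) :
    unitState u = halfState v + betaMap g (b 0) a := by
  obtain ⟨hub, hua, huz, hue⟩ := hu
  obtain ⟨hvb, hva, hvz, hve⟩ := hv
  -- Key shift lemma: v n m = u n (2^(n-1) + m) on the dependency-closed region.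
  have key : ∀ k n m, m * 2 ^ (N - n) ≤ k → 1 ≤ n → m ≤ 2 ^ (n - 1) →
      (n = 1 → m = 0) → v n m = u n (2 ^ (n - 1) + m) := by
    intro k
    induction k using Nat.strong_induction_on with
    | _ k IH =>
    intro n m hk hn1 hmb h1m
    by_cases hnN : N < n
    · rw [hvz n hnN, huz n hnN]
    push_neg at hnN
    rcases Nat.eq_zero_or_pos m with hm0 | hm1
    · subst hm0
      have hinit := hva n hn1 hnN
      rw [hinit]
      show u (n - 1 + 1) (2 ^ (n - 1)) = u n (2 ^ (n - 1) + 0)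
      rw [Nat.sub_add_cancel hn1, Nat.add_zero]
    · have hn2 : 2 ≤ n := by
        rcases Nat.lt_or_ge n 2 with h | h
        · exact absurd (h1m (by omega)) (by omega)
        · exact h
      have hX : 1 ≤ 2 ^ (N - n) := Nat.one_le_two_pow
      have hk1 : 1 ≤ k := le_trans (Nat.mul_pos hm1 (by positivity)) hk
      have hmk : (m - 1) * 2 ^ (N - n) + 2 ^ (N - n) ≤ k := by
        calc (m - 1) * 2 ^ (N - n) + 2 ^ (N - n) = (m - 1 + 1) * 2 ^ (N - n) := by
              rw [Nat.succ_mul]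
          _ = m * 2 ^ (N - n) := by rw [Nat.sub_add_cancel hm1]
          _ ≤ k := hk
      have hKm : (m - 1) * 2 ^ (N - n) ≤ k - 1 :=
        le_trans (Nat.le_sub_of_add_le hmk) (Nat.sub_le_sub_left hX k)
      have IH' : ∀ n' m', m' * 2 ^ (N - n') ≤ k - 1 → 1 ≤ n' → m' ≤ 2 ^ (n' - 1) →
          (n' = 1 → m' = 0) → v n' m' = u n' (2 ^ (n' - 1) + m') :=
        IH (k - 1) (by omega)
      have h2n1 : 2 ^ (n - 1) = 2 * 2 ^ (n - 2) := by
        rw [show n - 1 = n - 2 + 1 by omega, pow_succ, Nat.mul_comm]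
      have h2n : 2 ^ n = 2 * 2 ^ (n - 1) := by
        rw [← pow_succ']
        congr 1
        omega
      -- first argument of f
      have A1 : v n (m - 1) = u n (2 ^ (n - 1) + (m - 1)) := by
        apply IH' n (m - 1)
        · exact hKm
        · exact hn1
        · exact le_trans (Nat.sub_le _ _) hmb
        · intro h; omega
      -- second argument of f
      have A2 : v (n + 1) (2 * (m - 1)) = u (n + 1) (2 ^ n + 2 * (m - 1)) := by
        by_cases hnN' : N < n + 1
        · rw [hvz _ hnN', huz _ hnN']
        · push_neg at hnN'
          have hNn : 2 ^ (N - n) = 2 * 2 ^ (N - (n + 1)) := by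
            rw [show N - n = N - (n + 1) + 1 by omega, pow_succ, Nat.mul_comm]
          have := IH' (n + 1) (2 * (m - 1)) ?_ (by omega) ?_ (by omega)
          · rw [this, show n + 1 - 1 = n from rfl]
          · calc 2 * (m - 1) * 2 ^ (N - (n + 1))
                = (m - 1) * (2 * 2 ^ (N - (n + 1))) := by ring
              _ = (m - 1) * 2 ^ (N - n) := by rw [hNn]
              _ ≤ k - 1 := hKm
          · rw [show n + 1 - 1 = n from rfl, h2n]
            omega
      have hmpar := Nat.mod_two_eq_zero_or_one m
      have hpar : (2 ^ (n - 1) + m) % 2 = m % 2 := by omega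
      have hEv := hve n m hn1 hnN hm1
      have hEu := hue n (2 ^ (n - 1) + m) hn1 hnN (by omega)
      unfold IdealEq at hEv hEu
      rcases hmpar with he | ho
      · -- m even, m ≥ 2
        have hm2 : 2 ≤ m := by omega
        rw [if_neg (by omega)] at hEv
        rw [if_neg (by omega)] at hEu
        have A3 : v n (m - 2) = u n (2 ^ (n - 1) + (m - 2)) := by
          apply IH' n (m - 2)
          · exact le_trans (Nat.mul_le_mul_right _ (by omega)) hKm
          · exact hn1
          · omega
          · intro h; omega
        have A4 : v (n - 1) ((m - 2) / 2) = u (n - 1) (2 ^ (n - 2) + (m - 2) / 2) := by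
          have hNn1 : 2 ^ (N - (n - 1)) = 2 * 2 ^ (N - n) := by
            rw [show N - (n - 1) = N - n + 1 by omega, pow_succ, Nat.mul_comm]
          have := IH' (n - 1) ((m - 2) / 2) ?_ (by omega) ?_ ?_
          · rw [this, show n - 1 - 1 = n - 2 by omega]
          · calc (m - 2) / 2 * 2 ^ (N - (n - 1))
                = (m - 2) / 2 * 2 * 2 ^ (N - n) := by rw [hNn1]; ring
              _ = (m - 2) * 2 ^ (N - n) := by
                  congr 1
                  omega
              _ ≤ (m - 1) * 2 ^ (N - n) := Nat.mul_le_mul_right _ (by omega)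
              _ ≤ k - 1 := hKm
          · rw [show n - 1 - 1 = n - 2 by omega]
            omega
          · intro h
            have hn2' : n = 2 := by omega
            subst hn2'
            simp only [show (2:ℕ) - 1 = 1 from rfl, pow_one] at hmb
            omega
        rw [hEv, hEu, A1, A2, A3, A4]
        congr 2
        · congr 1
          omega
        · congr 1
          omega
        · congr 2
          omega
        · congr 1
          omega
      · -- m odd
        rw [if_pos ho] at hEv
        rw [if_pos (by omega)] at hEu
        rw [hEv, hEu, A1, A2]
        congr 2
        · congr 1
          omega
        · congr 1
          omega
  funext i
  match i with
  | 0 =>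
    show u 1 (2 ^ 1) = v 1 (2 ^ 0) + betaMap g (b 0) a 0
    have hEu := hue 1 2 le_rfl hN (by omega)
    have hEv := hve 1 1 le_rfl hN le_rfl
    unfold IdealEq at hEv hEu
    norm_num at hEv hEu
    have hv10 : v 1 0 = u 1 1 := hva 1 le_rfl hN
    have hv20 : v 2 0 = u 2 2 := by
      by_cases h2N : 2 ≤ N
      · exact hva 2 (by omega) h2N
      · rw [hvz 2 (by omega), huz 2 (by omega)]
    rw [show (2:ℕ) ^ 1 = 2 from rfl, show (2:ℕ) ^ 0 = 1 from rfl, hEu, hEv, hv10, hv20,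
      hub 0, hua 1 le_rfl hN]
    rfl
  | (j + 1) =>
    show u (j + 2) (2 ^ (j + 2)) = v (j + 2) (2 ^ (j + 1)) + betaMap g (b 0) a (j + 1)
    have hkey := key (2 ^ (j + 1) * 2 ^ (N - (j + 2))) (j + 2) (2 ^ (j + 1)) le_rfl
      (by omega) (le_of_eq rfl) (by omega)
    rw [show j + 2 - 1 = j + 1 from rfl] at hkey
    rw [hkey, show 2 ^ (j + 1) + 2 ^ (j + 1) = 2 ^ (j + 2) from ((pow_succ 2 (j+1)).trans (mul_two _)).symm]
    show u (j + 2) (2 ^ (j + 2)) = u (j + 2) (2 ^ (j + 2)) + 0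
    rw [add_zero]

end SSRG
end

section
/- For every N ≥ 1 the half-time flow maps of the regularized solutions satisfy the renormalization-group relation ψ^(N+1) = R_g[ψ^(N)], i.e., ψ^(N+1)(a) = σ_−(ψ^(N)(ψ^(N)(σ_+(a)))) + ξ(a) for all a ∈ X^ℕ; moreover ψ^(1)(a) = (f(a_1, 0), 0, 0, …). -/
open Filter Topology

namespace SSRG

variable {X : Type*}

/-!
The ideal system is self-similar. Dropping the coarsest scale of the level-`(N+1)` system
and running it twice as fast gives the level-`N` system from `σ₊ a`, and restarting a
regularized solution from its state at time `1/2` continues it. Both facts are uniqueness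
statements for the explicit recursion, proved by induction in time along the lattice. Together
they identify scales `≥ 3` of `ψ^(N+1)(a)` with those of `ψ^(N)(ψ^(N)(σ₊ a))`; the two coarsest
scales differ from it by `f(a₁, a₂)` and by the `g`-coupling to scale `1`, which is `ξ(a)`.
-/

/-- Induction along the lattice in the order of time: `uₙ(m+1)` depends on `uₙ(m)`,
`uₙ₊₁(2m)`, `uₙ₋₁((m-1)/2)` and `uₙ(m-1)`, all of which lie strictly earlier in the time
`m · 2^(N-n)` measured in units of the finest active scale `τ_N`. -/
theorem lattice_induction (N : ℕ) {P : ℕ → ℕ → Prop}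
    (above : ∀ n m, N < n → P n m)
    (initial : ∀ n, n ≤ N → P n 0)
    (step : ∀ n m, n ≤ N → P n m → P (n + 1) (2 * m) → P (n - 1) ((m - 1) / 2) →
      P n (m - 1) → P n (m + 1))
    (n m : ℕ) : P n m := by
  suffices key : ∀ k n m, n ≤ N → m * 2 ^ (N - n) = k → P n m by
    rcases le_or_gt n N with hn | hn
    · exact key _ n m hn rfl
    · exact above n m hn
  intro k
  induction k using Nat.strong_induction_on with
  | _ k ih =>
  rintro n (_ | m) hn rfl
  · exact initial n hn
  have earlier : ∀ n' m', m' * 2 ^ (N - n') < (m + 1) * 2 ^ (N - n) → P n' m' := by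
    intro n' m' hlt
    rcases le_or_gt n' N with h | h
    · exact ih _ hlt n' m' h rfl
    · exact above n' m' h
  have hpos : 0 < 2 ^ (N - n) := by positivity
  apply step n m hn
  · exact earlier n m (Nat.mul_lt_mul_of_pos_right (by omega) hpos)
  · rcases le_or_gt (n + 1) N with h | h
    · refine earlier _ _ ?_
      have hsplit : 2 ^ (N - n) = 2 * 2 ^ (N - (n + 1)) := by
        rw [← pow_succ']; congr 1; omega
      rw [hsplit] at hpos ⊢
      nlinarith
    · exact above _ _ h
  · refine earlier _ _ ?_
    have hle : 2 ^ (N - (n - 1)) ≤ 2 * 2 ^ (N - n) := by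
      rw [← pow_succ']; exact Nat.pow_le_pow_right (by norm_num) (by omega)
    calc (m - 1) / 2 * 2 ^ (N - (n - 1))
        ≤ (m - 1) / 2 * (2 * 2 ^ (N - n)) := Nat.mul_le_mul_left _ hle
      _ = (m - 1) / 2 * 2 * 2 ^ (N - n) := by ring
      _ < (m + 1) * 2 ^ (N - n) := Nat.mul_lt_mul_of_pos_right (by omega) hpos
  · exact earlier n (m - 1) (Nat.mul_lt_mul_of_pos_right (by omega) hpos)

section Regularized

variable [AddCommMonoid X] (f g : X → X → X)

def idealRhs (u : ℕ → ℕ → X) (n m : ℕ) : X :=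
  f (u n m) (u (n + 1) (2 * m)) +
    if m % 2 = 1 then g (u (n - 1) ((m - 1) / 2)) (u n (m - 1)) else 0

theorem idealEq_succ_iff {u : ℕ → ℕ → X} {n m : ℕ} :
    IdealEq f g u n (m + 1) ↔ u n (m + 1) = idealRhs f g u n m := by
  unfold IdealEq idealRhs
  rcases Nat.mod_two_eq_zero_or_one m with h | h
  · simp [h, show (m + 1) % 2 = 1 by omega]
  · simp [h, show (m + 1) % 2 ≠ 1 by omega, show m + 1 - 2 = m - 1 by omega]

theorem idealRhs_congr {u v : ℕ → ℕ → X} {n n' m m' : ℕ} (hpar : m % 2 = m' % 2)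
    (h₀ : u n m = v n' m') (h₁ : u (n + 1) (2 * m) = v (n' + 1) (2 * m'))
    (h₂ : m % 2 = 1 → u (n - 1) ((m - 1) / 2) = v (n' - 1) ((m' - 1) / 2) ∧
      u n (m - 1) = v n' (m' - 1)) :
    idealRhs f g u n m = idealRhs f g v n' m' := by
  unfold idealRhs
  rw [h₀, h₁, ← hpar]
  split_ifs with hodd
  · rw [(h₂ hodd).1, (h₂ hodd).2]
  · rfl

variable {f g}

theorem IsRegSol.apply_succ {N : ℕ} {a b : ℕ → X} {u : ℕ → ℕ → X}
    (hu : IsRegSol f g N a b u) {n : ℕ} (m : ℕ) (h₁ : 1 ≤ n) (hN : n ≤ N) :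
    u n (m + 1) = idealRhs f g u n m :=
  (idealEq_succ_iff f g).1 (hu.2.2.2 n (m + 1) h₁ hN (Nat.le_add_left 1 m))

/-- Self-similarity: on scales `≥ 2` and up to time `1/2`, the level-`(N+1)` solution from `a`
is the level-`N` solution from `σ₊ a`, run twice as fast. At scale `2` only the first step
avoids the boundary row, which the two solutions do not share. -/
theorem IsRegSol.eq_of_sigPlus {N : ℕ} {a b b' : ℕ → X} {u v : ℕ → ℕ → X}
    (hu : IsRegSol f g (N + 1) a b u) (hv : IsRegSol f g N (sigPlus a) b' v) (n m : ℕ)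
    (hn : 1 ≤ n) (hm : m ≤ 2 ^ n) (hn₁ : n = 1 → m ≤ 1) : u (n + 1) m = v n m := by
  induction n, m using lattice_induction N with
  | above n m hnN => rw [hu.2.2.1 (n + 1) (by omega), hv.2.2.1 n hnN]
  | initial n hnN =>
    rw [hu.2.1 (n + 1) (by omega) (by omega), hv.2.1 n hn hnN]
    exact congrArg a (by omega)
  | step n m hnN ih₀ ih₁ ih₂ ih₃ =>
    rw [hu.apply_succ m (by omega) (by omega), hv.apply_succ m hn hnN]
    refine idealRhs_congr f g rfl (ih₀ hn (by omega) (by omega))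
      (ih₁ (by omega) (by rw [pow_succ]; omega) (by omega)) fun hodd => ⟨?_, ?_⟩
    · have hn₂ : 2 ≤ n := by by_contra; have := hn₁ (by omega); omega
      have hsucc : n - 1 + 1 = n := by omega
      have hpow : 2 ^ n = 2 * 2 ^ (n - 1) := by rw [← pow_succ', hsucc]
      rw [← ih₂ (by omega) (by omega) (by intro h; rw [h, pow_one] at hpow; omega),
        Nat.add_sub_cancel, hsucc]
    · exact ih₃ hn (by omega) (by omega)

/-- Restarting at time `1/2` continues the solution: `wₙ(t) = vₙ(t + 1/2)` for `t ≤ 1/2`.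
At scale `1` half a unit is an odd number of steps, which swaps the parity deciding the
`g`-coupling, so there only the initial values agree. -/
theorem IsRegSol.eq_of_halfState {N : ℕ} {a b b' : ℕ → X} {v w : ℕ → ℕ → X}
    (hv : IsRegSol f g N a b v) (hw : IsRegSol f g N (halfState v) b' w) (n m : ℕ)
    (hn : 1 ≤ n) (hm : m ≤ 2 ^ (n - 1)) (hn₁ : n = 1 → m = 0) :
    w n m = v n (m + 2 ^ (n - 1)) := by
  induction n, m using lattice_induction N with
  | above n m hnN => rw [hw.2.2.1 n hnN, hv.2.2.1 n hnN]
  | initial n hnN =>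
    rw [hw.2.1 n hn hnN, zero_add]
    exact congrArg (v · _) (by omega)
  | step n m hnN ih₀ ih₁ ih₂ ih₃ =>
    have hn₂ : 2 ≤ n := by by_contra; have := hn₁ (by omega); omega
    obtain ⟨p, hp⟩ : ∃ p, 2 ^ (n - 1) = 2 * p := ⟨2 ^ (n - 2), by rw [← pow_succ']; congr 1; omega⟩
    have hp' : 2 ^ (n - 1 - 1) = p := by
      rw [show n - 1 = n - 1 - 1 + 1 by omega, pow_succ'] at hp; omega
    have hnext : 2 ^ (n + 1 - 1) = 2 * 2 ^ (n - 1) := by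
      rw [← pow_succ']; congr 1; omega
    rw [hw.apply_succ m hn hnN, Nat.add_right_comm, hv.apply_succ _ hn hnN]
    refine idealRhs_congr f g (by omega) (ih₀ hn (by omega) (by omega)) ?_ fun hodd => ⟨?_, ?_⟩
    · rw [ih₁ (by omega) (by omega) (by omega), hnext]; congr 1; ring
    · rw [ih₂ (by omega) (by rw [hp']; omega) (by intro h; rw [h, pow_one] at hm; omega), hp']
      congr 1; omega
    · rw [ih₃ hn (by omega) (by omega)]; congr 1; omega

end Regularized

theorem statement1_general {X : Type*} [AddCommMonoid X] (f g : X → X → X) :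
    (∀ (N : ℕ), 1 ≤ N → ∀ (a b b' b'' : ℕ → X) (u v w : ℕ → ℕ → X),
      IsRegSol f g (N + 1) a b u →
      IsRegSol f g N (sigPlus a) b' v →
      IsRegSol f g N (halfState v) b'' w →
      halfState u = sigMinus (halfState w) + xiMap f g a) ∧
    (∀ (a b : ℕ → X) (u : ℕ → ℕ → X), IsRegSol f g 1 a b u →
      halfState u = fun i => Nat.casesOn i (f (a 0) 0) fun _ => 0) := by
  refine ⟨fun N hN a b b' b'' u v w hu hv hw => ?_, fun a b u hu => ?_⟩
  · have hu₀ : ∀ n, 1 ≤ n → n ≤ N + 1 → u n 0 = a (n - 1) := hu.2.1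
    funext i
    rcases i with _ | _ | j
    · change u 1 1 = 0 + f (a 0) (a 1)
      simp [hu.apply_succ 0 le_rfl (by omega), idealRhs, hu₀ 1, hu₀ 2, hN]
    · change u 2 2 = w 1 1 + g (a 0) (a 1)
      have hv₁ := hv.eq_of_halfState hw 1 0 le_rfl (by simp) (fun _ => rfl)
      have hv₂ := hv.eq_of_halfState hw 2 0 (by omega) (by simp) (by omega)
      have hu₁ := hu.eq_of_sigPlus hv 1 1 le_rfl (by simp) (fun _ => le_rfl)
      have hu₂ := hu.eq_of_sigPlus hv 2 2 (by omega) (by simp) (by omega)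
      rw [hu.apply_succ 1 (by omega) (by omega), hw.apply_succ 0 le_rfl hN]
      simp [idealRhs, hu₁, hu₂, hv₁, hv₂, hu₀ 1, hu₀ 2 (by omega) (by omega)]
    · change u (j + 3) (2 ^ (j + 2)) = w (j + 2) (2 ^ (j + 1)) + 0
      rw [add_zero, hu.eq_of_sigPlus hv (j + 2) _ (by omega) le_rfl (by omega),
        hv.eq_of_halfState hw (j + 2) (2 ^ (j + 1)) (by omega) le_rfl (by omega),
        show j + 2 - 1 = j + 1 from rfl, ← two_mul, ← pow_succ']
  · funext i
    rcases i with _ | j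
    · change u 1 1 = f (a 0) 0
      simp [hu.apply_succ 0 le_rfl le_rfl, idealRhs, hu.2.1 1 le_rfl le_rfl, hu.2.2.1 2 one_lt_two]
    · exact hu.2.2.1 (j + 2) (by omega) _

/-- For every `N ≥ 1` the half-time flow maps of the regularized
solutions satisfy the RG relation `ψ^{(N+1)} = R_g[ψ^{(N)}]`, i.e.
`ψ^{(N+1)}(a) = σ₋(ψ^{(N)}(ψ^{(N)}(σ₊(a)))) + ξ(a)` for all `a`; moreover
`ψ^{(1)}(a) = (f(a₁,0), 0, 0, …)`.  The half-time maps are expressed through the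
regularized solutions: `ψ^{(N+1)}(a) = halfState u` where `u` is the level-`N+1`
regularized solution from `a`; `ψ^{(N)}(σ₊ a) = halfState v` where `v` is the
level-`N` regularized solution from `σ₊ a`; and `ψ^{(N)}(ψ^{(N)}(σ₊ a)) =
halfState w` where `w` is the level-`N` regularized solution from `halfState v`
(half-time maps do not depend on the boundary conditions `b`, `b'`, `b''`). -/
theorem statement1 {X : Type*} [MetricSpace X] [CompleteSpace X]
    [TopologicalSpace.SeparableSpace X] [AddCommMonoid X] [ContinuousAdd X]
    (f g : X → X → X) (hf : Continuous fun p : X × X => f p.1 p.2)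
    (hg : Continuous fun p : X × X => g p.1 p.2) :
    (∀ (N : ℕ), 1 ≤ N → ∀ (a b b' b'' : ℕ → X) (u v w : ℕ → ℕ → X),
      IsRegSol f g (N + 1) a b u →
      IsRegSol f g N (sigPlus a) b' v →
      IsRegSol f g N (halfState v) b'' w →
      halfState u = sigMinus (halfState w) + xiMap f g a) ∧
    (∀ (a b : ℕ → X) (u : ℕ → ℕ → X), IsRegSol f g 1 a b u →
      halfState u = fun i => Nat.casesOn i (f (a 0) 0) fun _ => 0) :=
  statement1_general f g

end SSRG
end

section
/- Fix N ≥ 1, initial conditions a and boundary conditions (b_t). Let u^(N+1) be the regularized solution at level N+1 for these data, define b̃_j = u_1^(N+1)(j/2) for integers j ≥ 0 (in particular b̃_0 = a_1), and let v be the regularized solution at level N with initial conditions σ_+(a) = (a_2, a_3, …) and boundary conditions (b̃_j). Then v_n(t) = u_{n+1}^(N+1)(t/2) for every lattice point (n, t) ∈ L (the scaling symmetry of the regularized system). -/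
open Filter Topology

namespace SSRG

variable {X : Type*}

/-- Scaling symmetry of the regularized system.  Let `u` be the
regularized solution at level `N+1` with data `(a, b)`.  Define the rescaled
boundary conditions `b̃_j = u₁^{(N+1)}(j/2) = u 1 j`, and let `v` be the
regularized solution at level `N` with initial conditions `σ₊(a)` and boundary
conditions `b̃`.  Then `b̃₀ = a₁` and `vₙ(t) = u_{n+1}^{(N+1)}(t/2)` at every
lattice point, i.e. `v n m = u (n+1) m` for all `n ≥ 1, m ≥ 0` (the time index `m`
at scale `n` corresponds to the time `m·τₙ` for `v` and `m·τ_{n+1} = (m·τₙ)/2`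
for `u`). -/
theorem statement2 {X : Type*} [MetricSpace X] [CompleteSpace X]
    [TopologicalSpace.SeparableSpace X] [AddCommMonoid X] [ContinuousAdd X]
    (f g : X → X → X) (hf : Continuous fun p : X × X => f p.1 p.2)
    (hg : Continuous fun p : X × X => g p.1 p.2)
    (N : ℕ) (hN : 1 ≤ N) (a b : ℕ → X) (u v : ℕ → ℕ → X)
    (hu : IsRegSol f g (N + 1) a b u)
    (hv : IsRegSol f g N (sigPlus a) (fun j => u 1 j) v) :
    u 1 0 = a 0 ∧ ∀ n m, 1 ≤ n → v n m = u (n + 1) m := by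
  obtain ⟨hub, hua, huz, hue⟩ := hu
  obtain ⟨hvb, hva, hvz, hve⟩ := hv
  refine ⟨hua 1 le_rfl (by omega), ?_⟩
  have key : ∀ k, ∀ n m, 1 ≤ n → m * 2 ^ (N + 1 - n) < k → v n m = u (n + 1) m := by
    intro k
    induction k with
    | zero => intro n m _ h; exact absurd h (Nat.not_lt_zero _)
    | succ k ih =>
      intro n m hn hlt
      by_cases hnN : N < n
      · rw [hvz n hnN, huz (n + 1) (by omega)]
      push_neg at hnN
      rcases Nat.eq_zero_or_pos m with rfl | hm
      · rw [hva n hn hnN, hua (n + 1) (by omega) (by omega)]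
        simp only [sigPlus]
        congr 1
        omega
      have hp1 : 1 ≤ 2 ^ (N + 1 - n) := Nat.one_le_two_pow
      have hmp : m * 2 ^ (N + 1 - n) ≤ k := by omega
      have hsub : (m - 1) * 2 ^ (N + 1 - n) = m * 2 ^ (N + 1 - n) - 2 ^ (N + 1 - n) :=
        Nat.sub_one_mul m _
      have hple : 2 ^ (N + 1 - n) ≤ m * 2 ^ (N + 1 - n) := Nat.le_mul_of_pos_left _ hm
      have hsub2 : (m - 2) * 2 ^ (N + 1 - n) = m * 2 ^ (N + 1 - n) - 2 * 2 ^ (N + 1 - n) :=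
        Nat.sub_mul m 2 _
      have A : (m - 1) * 2 ^ (N + 1 - n) < k := by omega
      have B : (m - 2) * 2 ^ (N + 1 - n) < k := by omega
      have pow2 : 2 * 2 ^ (N - n) = 2 ^ (N + 1 - n) := by
        rw [show N + 1 - n = (N - n) + 1 by omega, pow_succ]
        ring
      have hev := hve n m hn hnN hm
      have heu := hue (n + 1) m (by omega) (by omega) hm
      have d1 : v n (m - 1) = u (n + 1) (m - 1) := ih n (m - 1) hn A
      have d2 : v (n + 1) (2 * (m - 1)) = u (n + 1 + 1) (2 * (m - 1)) := by
        refine ih (n + 1) (2 * (m - 1)) (by omega) ?_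
        rw [show N + 1 - (n + 1) = N - n by omega]
        calc 2 * (m - 1) * 2 ^ (N - n) = (m - 1) * (2 * 2 ^ (N - n)) := by ring
          _ = (m - 1) * 2 ^ (N + 1 - n) := by rw [pow2]
          _ < k := A
      rcases Nat.mod_two_eq_zero_or_one m with hpar | hpar
      · simp only [IdealEq, hpar] at hev heu
        norm_num at hev heu
        have hm2 : 2 ≤ m := by omega
        have d3 : v n (m - 2) = u (n + 1) (m - 2) := ih n (m - 2) hn B
        have d4 : v (n - 1) ((m - 2) / 2) = u n ((m - 2) / 2) := by
          rcases Nat.eq_or_lt_of_le hn with h1 | h1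
          · rw [← h1]
            exact hvb ((m - 2) / 2)
          · have hq : 2 * ((m - 2) / 2) = m - 2 := by omega
            have hb : (m - 2) / 2 * 2 ^ (N + 1 - (n - 1)) < k := by
              rw [show N + 1 - (n - 1) = (N + 1 - n) + 1 by omega, pow_succ]
              calc (m - 2) / 2 * (2 ^ (N + 1 - n) * 2)
                  = 2 * ((m - 2) / 2) * 2 ^ (N + 1 - n) := by ring
                _ = (m - 2) * 2 ^ (N + 1 - n) := by rw [hq]
                _ < k := B
            have := ih (n - 1) ((m - 2) / 2) (by omega) hb
            rwa [show n - 1 + 1 = n by omega] at this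
        rw [hev, heu, d1, d2, d3, d4]
      · simp only [IdealEq, hpar] at hev heu
        norm_num at hev heu
        rw [hev, heu, d1, d2]
  intro n m hn
  exact key (m * 2 ^ (N + 1 - n) + 1) n m hn (Nat.lt_succ_self _)

end SSRG
end

section
/- (Inviscid limit) Let ψ^(N) be the half-time flow maps of the regularized solutions and suppose there is a continuous map ψ^∞ : X^ℕ → X^ℕ with ψ^(N) → ψ^∞ in the sense of map convergence. Then for all initial conditions a and boundary conditions (b_t): (i) for every lattice point (n,t) ∈ L the limit u_n^∞(t) = lim_{N→∞} u_n^(N)(t) exists; (ii) the field u^∞ solves the ideal system with these initial and boundary conditions; (iii) for every integer t ≥ 1, u^∞(t) = φ^∞_{b_{t−1}} ∘ ⋯ ∘ φ^∞_{b_1} ∘ φ^∞_{b_0}(a), where φ^∞_b = ψ^∞ ∘ ψ^∞ + β_b. -/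
/-!
The regularized system has two self-similarities: shifting time by an integer `t` and dropping
the coarsest scale (which rescales time by `2`) both turn a regularized solution into another
one. Restarting a solution at time `1/2` also agrees with the original on all scales `n ≥ 2`
up to time `1/2`, because there the equations only see scale `1` at time `0`; this gives the
unit-time identity `u(1) = ψ^(N)(ψ^(N)(u(0))) + β_{b₀}(u(0))`. Iterating it and passing to the
limit with map convergence yields convergence at all integer times (and, through one more
`ψ^(N)`, at half-integer times) for any convergent initial and boundary data, hence at every
point of scale `1`. After dropping scales, scale `n + 1` of a solution is scale `n` of a solution
whose boundary row is scale `1` of the original, so induction on the scale gives convergence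
everywhere. The ideal equations then pass to the limit by continuity of `f` and `g`.
-/

open Filter Topology

namespace SSRG

variable {X : Type*}

/-- Limiting unit-time flow map `φ^∞_b = ψ^∞ ∘ ψ^∞ + β_b`. -/
def phiInf [AddCommMonoid X] (g : X → X → X) (ψinf : (ℕ → X) → (ℕ → X)) (b : X) :
    (ℕ → X) → (ℕ → X) :=
  fun a => ψinf (ψinf a) + betaMap g b a

/-- Iterated composition `φ^∞_{b_{t-1}} ∘ ⋯ ∘ φ^∞_{b_1} ∘ φ^∞_{b_0}`. -/
def phiIter [AddCommMonoid X] (g : X → X → X) (ψinf : (ℕ → X) → (ℕ → X))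
    (b : ℕ → X) : ℕ → (ℕ → X) → (ℕ → X)
  | 0 => id
  | t + 1 => fun a => phiInf g ψinf (b t) (phiIter g ψinf b t a)

def timeShift (v : ℕ → ℕ → X) (t : ℕ) : ℕ → ℕ → X := fun n m => v n (m + t * 2 ^ n)

lemma unitState_timeShift (v : ℕ → ℕ → X) (t : ℕ) :
    unitState (timeShift v t) = intState v (t + 1) := by
  funext i
  simp only [unitState, timeShift, intState]
  ring_nf

section Algebra

variable [AddCommMonoid X] {f g : X → X → X}

lemma IdealEq.shift {v : ℕ → ℕ → X} {s : ℕ → ℕ} {n m : ℕ} (hm : 1 ≤ m)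
    (hs : s n = 2 * s (n - 1)) (hs' : s (n + 1) = 2 * s n)
    (h : IdealEq f g v n (m + s n)) : IdealEq f g (fun n m => v n (m + s n)) n m := by
  unfold IdealEq at h ⊢
  beta_reduce
  rw [hs']
  rw [hs] at h ⊢
  have hpar : (m + 2 * s (n - 1)) % 2 = m % 2 := by omega
  by_cases hodd : m % 2 = 1
  · rw [if_pos hodd]
    rw [if_pos (hpar.trans hodd)] at h
    rw [h, show m + 2 * s (n - 1) - 1 = m - 1 + 2 * s (n - 1) by omega,
      show 2 * (m - 1 + 2 * s (n - 1)) = 2 * (m - 1) + 2 * (2 * s (n - 1)) by ring]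
  · rw [if_neg hodd]
    rw [if_neg (hpar.trans_ne hodd)] at h
    rw [h, show m + 2 * s (n - 1) - 1 = m - 1 + 2 * s (n - 1) by omega,
      show 2 * (m - 1 + 2 * s (n - 1)) = 2 * (m - 1) + 2 * (2 * s (n - 1)) by ring,
      show m + 2 * s (n - 1) - 2 = m - 2 + 2 * s (n - 1) by omega,
      show (m - 2 + 2 * s (n - 1)) / 2 = (m - 2) / 2 + s (n - 1) by omega]

namespace IsRegSol

variable {N : ℕ} {a b : ℕ → X} {v : ℕ → ℕ → X}

lemma timeShift (hv : IsRegSol f g N a b v) (t : ℕ) :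
    IsRegSol f g N (intState v t) (fun m => b (t + m)) (SSRG.timeShift v t) := by
  obtain ⟨hb, ha, hzero, heq⟩ := hv
  refine ⟨fun m => ?_, fun n h1 _ => ?_, fun n hn m => hzero n hn _, fun n m h1 hN hm => ?_⟩
  · simpa [SSRG.timeShift, add_comm] using hb (t + m)
  · simp only [SSRG.timeShift, intState, zero_add, Nat.sub_add_cancel h1]
  · refine (heq n (m + t * 2 ^ n) h1 hN (by omega)).shift hm ?_ ?_
    · rw [← Nat.sub_add_cancel h1, pow_succ, Nat.add_sub_cancel]; ring
    · ring

lemma scaleShift (hv : IsRegSol f g (N + 1) a b v) :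
    IsRegSol f g N (sigPlus a) (v 1) (fun n => v (n + 1)) := by
  obtain ⟨_, ha, hzero, heq⟩ := hv
  refine ⟨fun m => rfl, fun n h1 hN => ?_, fun n hn => hzero (n + 1) (by omega),
    fun n m h1 hN hm => ?_⟩
  · simp only [ha (n + 1) (by omega) (by omega), sigPlus, Nat.sub_add_cancel h1,
      Nat.add_sub_cancel]
  · simpa only [IdealEq, Nat.sub_add_cancel h1, Nat.add_sub_cancel] using
      heq (n + 1) m (by omega) (by omega) hm

end IsRegSol

lemma eq_of_idealEq_of_le_half {N : ℕ} {u w : ℕ → ℕ → X}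
    (hu : ∀ n m, 2 ≤ n → n ≤ N → 1 ≤ m → IdealEq f g u n m)
    (hw : ∀ n m, 2 ≤ n → n ≤ N → 1 ≤ m → IdealEq f g w n m)
    (hinit : ∀ n, 1 ≤ n → n ≤ N → u n 0 = w n 0)
    (hhigh : ∀ n m, N < n → u n m = w n m) :
    ∀ n m, 2 ≤ n → n ≤ N → m * 2 ^ (N - n) ≤ 2 ^ (N - 1) → u n m = w n m := by
  suffices H : ∀ k n m, m * 2 ^ (N - n) = k → 2 ≤ n → n ≤ N → k ≤ 2 ^ (N - 1) →
      u n m = w n m from fun n m => H _ n m rfl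
  intro k
  induction k using Nat.strong_induction_on with
  | _ k ih =>
  rintro n m rfl hn hnN hk
  rcases Nat.eq_zero_or_pos m with rfl | hm
  · exact hinit n (by omega) hnN
  have hP : 0 < 2 ^ (N - n) := by positivity
  have earlier : ∀ n' m', 2 ≤ n' → (n' ≤ N → m' * 2 ^ (N - n') < m * 2 ^ (N - n)) →
      u n' m' = w n' m' := by
    intro n' m' hn' hlt
    by_cases h : n' ≤ N
    · exact ih _ (hlt h) n' m' rfl hn' h ((hlt h).le.trans hk)
    · exact hhigh n' m' (by omega)
  have same_scale : ∀ j, j < m → u n j = w n j := fun j hj =>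
    earlier n j hn fun _ => Nat.mul_lt_mul_of_pos_right hj hP
  have finer : u (n + 1) (2 * (m - 1)) = w (n + 1) (2 * (m - 1)) := by
    refine earlier _ _ (by omega) fun h => ?_
    rw [show N - n = N - (n + 1) + 1 by omega, pow_succ,
      show 2 * (m - 1) * 2 ^ (N - (n + 1)) = (m - 1) * (2 ^ (N - (n + 1)) * 2) by ring]
    exact Nat.mul_lt_mul_of_pos_right (by omega) (by positivity)
  have hum := hu n m hn hnN hm
  have hwm := hw n m hn hnN hm
  unfold IdealEq at hum hwm
  split_ifs at hum hwm with hodd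
  · rw [hum, hwm, same_scale (m - 1) (by omega), finer]
  have hcoarse : (m - 2) / 2 * 2 ^ (N - (n - 1)) < m * 2 ^ (N - n) :=
    calc (m - 2) / 2 * 2 ^ (N - (n - 1)) = (m - 2) / 2 * 2 * 2 ^ (N - n) := by
          rw [show N - (n - 1) = N - n + 1 by omega, pow_succ]; ring
      _ ≤ (m - 2) * 2 ^ (N - n) := Nat.mul_le_mul_right _ (Nat.div_mul_le_self _ _)
      _ < m * 2 ^ (N - n) := Nat.mul_lt_mul_of_pos_right (by omega) hP
  have coarser : u (n - 1) ((m - 2) / 2) = w (n - 1) ((m - 2) / 2) := by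
    rcases (by omega : n = 2 ∨ 3 ≤ n) with rfl | hn3
    · -- scale `1` is only seen at time `0` before time `1/2`
      have h0 : (m - 2) / 2 = 0 := by
        have : (m - 2) / 2 * 2 ^ (N - 1) < 1 * 2 ^ (N - 1) := by simpa using hcoarse.trans_le hk
        exact Nat.lt_one_iff.mp (Nat.lt_of_mul_lt_mul_right this)
      rw [h0]
      exact hinit 1 le_rfl (by omega)
    · exact earlier _ _ (by omega) fun _ => hcoarse
  rw [hum, hwm, same_scale (m - 1) (by omega), same_scale (m - 2) (by omega), finer, coarser]

lemma IsRegSol.unitState_eq {N : ℕ} {a b b' : ℕ → X} {v z : ℕ → ℕ → X} (hN : 1 ≤ N)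
    (hv : IsRegSol f g N a b v) (hz : IsRegSol f g N (halfState v) b' z) :
    unitState v = halfState z + betaMap g (b 0) a := by
  have hagree : ∀ n, 2 ≤ n → n ≤ N → v n (2 ^ (n - 1) + 2 ^ (n - 1)) = z n (2 ^ (n - 1)) :=
    fun n hn hnN => eq_of_idealEq_of_le_half (u := fun n m => v n (m + 2 ^ (n - 1)))
      (fun k m hk hkN hm => (hv.2.2.2 k _ (by omega) hkN (le_add_right hm)).shift hm
        (by rw [← pow_succ']; congr 1; omega) (by rw [← pow_succ']; congr 1; omega))
      (fun k m hk hkN hm => hz.2.2.2 k m (by omega) hkN hm)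
      (fun k h1 hkN => by simp [hz.2.1 k h1 hkN, halfState, Nat.sub_add_cancel h1])
      (fun k m hk => by simp [hv.2.2.1 k hk, hz.2.2.1 k hk])
      n _ hn hnN (le_of_eq (by rw [← pow_add]; congr 1; omega))
  funext i
  rcases i with _ | i
  · have hv12 := hv.2.2.2 1 2 le_rfl hN (by omega)
    have hz11 := hz.2.2.2 1 1 le_rfl hN le_rfl
    have hz20 : z 2 0 = v 2 2 := by
      by_cases h2 : 2 ≤ N
      · simp [hz.2.1 2 (by omega) h2, halfState]
      · rw [hz.2.2.1 2 (by omega), hv.2.2.1 2 (by omega)]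
    simp only [IdealEq] at hv12 hz11
    norm_num at hv12 hz11
    simp [unitState, halfState, betaMap, hv12, hz11, hz20, hz.2.1 1 le_rfl hN, hv.1 0,
      hv.2.1 1 le_rfl hN]
  · show v (i + 2) (2 ^ (i + 2)) = z (i + 2) (2 ^ (i + 1)) + 0
    rw [add_zero]
    by_cases h : i + 2 ≤ N
    · have := hagree (i + 2) (by omega) h
      rwa [show i + 2 - 1 = i + 1 from rfl, ← two_mul, ← pow_succ'] at this
    · rw [hv.2.2.1 _ (by omega), hz.2.2.1 _ (by omega)]

lemma unitState_eq_flow {ψ : ℕ → (ℕ → X) → (ℕ → X)}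
    (hψ : ∀ N, 1 ≤ N → ∀ (a' b' : ℕ → X) (v : ℕ → ℕ → X),
      IsRegSol f g N a' b' v → ψ N a' = halfState v)
    (hex : ∀ N, 1 ≤ N → ∀ a' b' : ℕ → X, ∃ v : ℕ → ℕ → X, IsRegSol f g N a' b' v)
    {N : ℕ} (hN : 1 ≤ N) {a b : ℕ → X} {v : ℕ → ℕ → X} (hv : IsRegSol f g N a b v) :
    unitState v = ψ N (ψ N a) + betaMap g (b 0) a := by
  obtain ⟨z, hz⟩ := hex N hN (halfState v) b
  rw [hψ N hN _ _ _ hv, hψ N hN _ _ _ hz, hv.unitState_eq hN hz]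

end Algebra

lemma continuous_sigPlus [TopologicalSpace X] : Continuous (sigPlus : (ℕ → X) → ℕ → X) :=
  continuous_pi fun i => continuous_apply (i + 1)

lemma continuous_betaMap [TopologicalSpace X] [Zero X] {g : X → X → X}
    (hg : Continuous fun p : X × X => g p.1 p.2) :
    Continuous fun p : X × (ℕ → X) => betaMap g p.1 p.2 := by
  refine continuous_pi fun i => ?_
  rcases i with _ | i
  · exact hg.comp (continuous_fst.prodMk ((continuous_apply 0).comp continuous_snd))
  · exact continuous_const

section Limit

variable [TopologicalSpace X] [AddCommMonoid X] [ContinuousAdd X] {f g : X → X → X}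
  {ψ : ℕ → (ℕ → X) → (ℕ → X)} {ψinf : (ℕ → X) → (ℕ → X)}
  {V : ℕ → ℕ → ℕ → X} {A B : ℕ → ℕ → X} {Ainf Binf : ℕ → X}

lemma tendsto_intState
    (hg : Continuous fun p : X × X => g p.1 p.2)
    (hψ : ∀ N, 1 ≤ N → ∀ (a' b' : ℕ → X) (v : ℕ → ℕ → X),
      IsRegSol f g N a' b' v → ψ N a' = halfState v)
    (hex : ∀ N, 1 ≤ N → ∀ a' b' : ℕ → X, ∃ v : ℕ → ℕ → X, IsRegSol f g N a' b' v)
    (hconv : MapConv ψ ψinf)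
    (hV : ∀ᶠ N in atTop, IsRegSol f g N (A N) (B N) (V N))
    (hA : Tendsto A atTop (𝓝 Ainf)) (hB : Tendsto B atTop (𝓝 Binf)) (t : ℕ) :
    Tendsto (fun N => intState (V N) t) atTop (𝓝 (phiIter g ψinf Binf t Ainf)) := by
  induction t with
  | zero =>
    refine tendsto_pi_nhds.2 fun i => (tendsto_pi_nhds.1 hA i).congr' ?_
    filter_upwards [hV, eventually_ge_atTop (i + 1)] with N hN hiN
    simp [intState, hN.2.1 (i + 1) (by omega) hiN]
  | succ t ih =>
    have hβ : Tendsto (fun N => betaMap g (B N t) (intState (V N) t)) atTop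
        (𝓝 (betaMap g (Binf t) (phiIter g ψinf Binf t Ainf))) :=
      ((continuous_betaMap hg).tendsto _).comp ((tendsto_pi_nhds.1 hB t).prodMk_nhds ih)
    refine ((hconv _ _ (hconv _ _ ih)).add hβ).congr' ?_
    filter_upwards [hV, eventually_ge_atTop 1] with N hN h1N
    rw [← unitState_timeShift, unitState_eq_flow hψ hex h1N (hN.timeShift t), add_zero]

lemma tendsto_halfState_timeShift
    (hg : Continuous fun p : X × X => g p.1 p.2)
    (hψ : ∀ N, 1 ≤ N → ∀ (a' b' : ℕ → X) (v : ℕ → ℕ → X),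
      IsRegSol f g N a' b' v → ψ N a' = halfState v)
    (hex : ∀ N, 1 ≤ N → ∀ a' b' : ℕ → X, ∃ v : ℕ → ℕ → X, IsRegSol f g N a' b' v)
    (hconv : MapConv ψ ψinf)
    (hV : ∀ᶠ N in atTop, IsRegSol f g N (A N) (B N) (V N))
    (hA : Tendsto A atTop (𝓝 Ainf)) (hB : Tendsto B atTop (𝓝 Binf)) (t : ℕ) :
    Tendsto (fun N => halfState (timeShift (V N) t)) atTop
      (𝓝 (ψinf (phiIter g ψinf Binf t Ainf))) := by
  refine (hconv _ _ (tendsto_intState hg hψ hex hconv hV hA hB t)).congr' ?_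
  filter_upwards [hV, eventually_ge_atTop 1] with N hN h1N
  exact hψ N h1N _ _ _ (hN.timeShift t)

lemma exists_tendsto_scale_one
    (hg : Continuous fun p : X × X => g p.1 p.2)
    (hψ : ∀ N, 1 ≤ N → ∀ (a' b' : ℕ → X) (v : ℕ → ℕ → X),
      IsRegSol f g N a' b' v → ψ N a' = halfState v)
    (hex : ∀ N, 1 ≤ N → ∀ a' b' : ℕ → X, ∃ v : ℕ → ℕ → X, IsRegSol f g N a' b' v)
    (hconv : MapConv ψ ψinf)
    (hV : ∀ᶠ N in atTop, IsRegSol f g N (A N) (B N) (V N))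
    (hA : Tendsto A atTop (𝓝 Ainf)) (hB : Tendsto B atTop (𝓝 Binf)) :
    ∃ L, Tendsto (fun N => V N 1) atTop (𝓝 L) := by
  have h : ∀ m, ∃ L, Tendsto (fun N => V N 1 m) atTop (𝓝 L) := by
    intro m
    obtain ⟨t, rfl | rfl⟩ := Nat.even_or_odd' m
    · refine ⟨_, (tendsto_pi_nhds.1 (tendsto_intState hg hψ hex hconv hV hA hB t) 0).congr
        fun N => ?_⟩
      simp [intState, mul_comm]
    · refine ⟨_, (tendsto_pi_nhds.1
        (tendsto_halfState_timeShift hg hψ hex hconv hV hA hB t) 0).congr fun N => ?_⟩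
      simp [halfState, timeShift, add_comm, mul_comm]
  choose L hL using h
  exact ⟨L, tendsto_pi_nhds.2 hL⟩

lemma exists_tendsto_scale
    (hg : Continuous fun p : X × X => g p.1 p.2)
    (hψ : ∀ N, 1 ≤ N → ∀ (a' b' : ℕ → X) (v : ℕ → ℕ → X),
      IsRegSol f g N a' b' v → ψ N a' = halfState v)
    (hex : ∀ N, 1 ≤ N → ∀ a' b' : ℕ → X, ∃ v : ℕ → ℕ → X, IsRegSol f g N a' b' v)
    (hconv : MapConv ψ ψinf) (n : ℕ)
    (hV : ∀ᶠ N in atTop, IsRegSol f g N (A N) (B N) (V N))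
    (hA : Tendsto A atTop (𝓝 Ainf)) (hB : Tendsto B atTop (𝓝 Binf)) :
    ∃ L, Tendsto (fun N => V N n) atTop (𝓝 L) := by
  induction n generalizing V A B Ainf Binf with
  | zero =>
    refine ⟨Binf, hB.congr' ?_⟩
    filter_upwards [hV] with N hN
    exact (funext hN.1).symm
  | succ n ih =>
    obtain ⟨L₁, hL₁⟩ := exists_tendsto_scale_one hg hψ hex hconv hV hA hB
    have hW : ∀ᶠ N in atTop,
        IsRegSol f g N (sigPlus (A (N + 1))) (V (N + 1) 1) (fun n => V (N + 1) (n + 1)) :=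
      ((tendsto_add_atTop_nat 1).eventually hV).mono fun N hN => hN.scaleShift
    obtain ⟨L, hL⟩ := ih hW
      ((continuous_sigPlus.tendsto _).comp (hA.comp (tendsto_add_atTop_nat 1)))
      (hL₁.comp (tendsto_add_atTop_nat 1))
    exact ⟨L, (tendsto_add_atTop_iff_nat 1).1 hL⟩

end Limit

section WeakLimit

variable [TopologicalSpace X] [T2Space X] [AddCommMonoid X] [ContinuousAdd X] {f g : X → X → X}
  {u : ℕ → ℕ → ℕ → X} {uinf : ℕ → ℕ → X}

lemma IdealEq.of_tendsto (hf : Continuous fun p : X × X => f p.1 p.2)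
    (hg : Continuous fun p : X × X => g p.1 p.2)
    (htend : ∀ n m, Tendsto (fun N => u N n m) atTop (𝓝 (uinf n m))) {n m : ℕ}
    (h : ∀ᶠ N in atTop, IdealEq f g (u N) n m) : IdealEq f g uinf n m := by
  have hf' := (hf.tendsto _).comp ((htend n (m - 1)).prodMk_nhds (htend (n + 1) (2 * (m - 1))))
  have hg' := (hg.tendsto _).comp ((htend (n - 1) ((m - 2) / 2)).prodMk_nhds (htend n (m - 2)))
  by_cases hodd : m % 2 = 1
  · simp only [IdealEq, hodd, if_true] at h ⊢
    exact tendsto_nhds_unique_of_eventuallyEq (htend n m) hf' h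
  · simp only [IdealEq, hodd, if_false] at h ⊢
    exact tendsto_nhds_unique_of_eventuallyEq (htend n m) (hf'.add hg') h

lemma isWeakSol_of_tendsto (hf : Continuous fun p : X × X => f p.1 p.2)
    (hg : Continuous fun p : X × X => g p.1 p.2) {a b : ℕ → X}
    (hu : ∀ᶠ N in atTop, IsRegSol f g N a b (u N))
    (htend : ∀ n m, Tendsto (fun N => u N n m) atTop (𝓝 (uinf n m))) :
    IsWeakSol f g a b uinf := by
  refine ⟨fun m => ?_, fun n hn => ?_, fun n m hn hm => ?_⟩
  · refine tendsto_nhds_unique (htend 0 m) (tendsto_const_nhds.congr' ?_)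
    filter_upwards [hu] with N hN
    exact (hN.1 m).symm
  · refine tendsto_nhds_unique (htend n 0) (tendsto_const_nhds.congr' ?_)
    filter_upwards [hu, eventually_ge_atTop n] with N hN hnN
    exact (hN.2.1 n hn hnN).symm
  · refine IdealEq.of_tendsto hf hg htend ?_
    filter_upwards [hu, eventually_ge_atTop n] with N hN hnN
    exact hN.2.2.2 n m hn hnN hm

end WeakLimit

theorem statement6_general {X : Type*} [MetricSpace X] [AddCommMonoid X] [ContinuousAdd X]
    (f g : X → X → X) (hf : Continuous fun p : X × X => f p.1 p.2)
    (hg : Continuous fun p : X × X => g p.1 p.2)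
    (ψ : ℕ → (ℕ → X) → (ℕ → X))
    (hψ : ∀ N, 1 ≤ N → ∀ (a' b' : ℕ → X) (v : ℕ → ℕ → X),
      IsRegSol f g N a' b' v → ψ N a' = halfState v)
    (hex : ∀ N, 1 ≤ N → ∀ a' b' : ℕ → X, ∃ v : ℕ → ℕ → X, IsRegSol f g N a' b' v)
    (ψinf : (ℕ → X) → (ℕ → X))
    (hconv : MapConv ψ ψinf)
    (a b : ℕ → X) (u : ℕ → ℕ → ℕ → X)
    (hu : ∀ N, 1 ≤ N → IsRegSol f g N a b (u N)) :
    ∃ uinf : ℕ → ℕ → X,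
      (∀ n m : ℕ, Tendsto (fun N => u N n m) atTop (𝓝 (uinf n m))) ∧
      IsWeakSol f g a b uinf ∧
      (∀ t : ℕ, 1 ≤ t → intState uinf t = phiIter g ψinf b t a) := by
  have hV : ∀ᶠ N in atTop, IsRegSol f g N a b (u N) := eventually_atTop.2 ⟨1, hu⟩
  choose uinf huinf using fun n =>
    exists_tendsto_scale hg hψ hex hconv n hV tendsto_const_nhds tendsto_const_nhds
  have htend : ∀ n m, Tendsto (fun N => u N n m) atTop (𝓝 (uinf n m)) :=
    fun n => tendsto_pi_nhds.1 (huinf n)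
  refine ⟨uinf, htend, isWeakSol_of_tendsto hf hg hV htend, fun t _ => ?_⟩
  exact tendsto_nhds_unique (tendsto_pi_nhds.2 fun i => htend _ _)
    (tendsto_intState hg hψ hex hconv hV tendsto_const_nhds tendsto_const_nhds t)

/-- **Inviscid limit.** Let `ψ N` be the half-time flow maps of the
regularized solutions (pinned down via `hψ` and `hex`), and suppose there is a
continuous map `ψ^∞` with `ψ^{(N)} → ψ^∞` in the sense of map convergence.  Then
for any initial conditions `a` and boundary conditions `b`, with `u N` the
regularized solution at level `N`: (i) at every lattice point the regularized
solutions converge to a limit `u^∞`; (ii) `u^∞` is a (weak) solution of the ideal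
system with the given data; (iii) at integer times `t ≥ 1`,
`u^∞(t) = φ^∞_{b_{t-1}} ∘ ⋯ ∘ φ^∞_{b_0}(a)` with `φ^∞_b = ψ^∞ ∘ ψ^∞ + β_b`. -/
theorem statement6 {X : Type*} [MetricSpace X] [CompleteSpace X]
    [TopologicalSpace.SeparableSpace X] [AddCommMonoid X] [ContinuousAdd X]
    (f g : X → X → X) (hf : Continuous fun p : X × X => f p.1 p.2)
    (hg : Continuous fun p : X × X => g p.1 p.2)
    (ψ : ℕ → (ℕ → X) → (ℕ → X))
    (hψ : ∀ N, 1 ≤ N → ∀ (a' b' : ℕ → X) (v : ℕ → ℕ → X),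
      IsRegSol f g N a' b' v → ψ N a' = halfState v)
    (hex : ∀ N, 1 ≤ N → ∀ a' b' : ℕ → X, ∃ v : ℕ → ℕ → X, IsRegSol f g N a' b' v)
    (ψinf : (ℕ → X) → (ℕ → X)) (hcont : Continuous ψinf)
    (hconv : MapConv ψ ψinf)
    (a b : ℕ → X) (u : ℕ → ℕ → ℕ → X)
    (hu : ∀ N, 1 ≤ N → IsRegSol f g N a b (u N)) :
    ∃ uinf : ℕ → ℕ → X,
      (∀ n m : ℕ, Tendsto (fun N => u N n m) atTop (𝓝 (uinf n m))) ∧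
      IsWeakSol f g a b uinf ∧
      (∀ t : ℕ, 1 ≤ t → intState uinf t = phiIter g ψinf b t a) :=
  statement6_general f g hf hg ψ hψ hex ψinf hconv a b u hu

end SSRG
end

section
/- In symbolic model A, for every continuous map ψ^(1) : X^ℕ → X^ℕ, the RG iterates ψ^(N) = R_g^{N−1}[ψ^(1)] converge in the sense of map convergence to the map ψ^∞, and ψ^∞ is a fixed point of the RG operator: R_g[ψ^∞] = ψ^∞. -/
open Filter Topology

namespace SSRG

variable {X : Type*}

/-- The two-point space `{0,1}` carries the discrete topology. -/
instance : TopologicalSpace (ZMod 2) := ⊥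

instance : DiscreteTopology (ZMod 2) := ⟨rfl⟩

/-- Interaction `f` of the symbolic model A:
`f(0,0) = f(0,1) = f(1,1) = 0`, `f(1,0) = 1`. -/
def fA : ZMod 2 → ZMod 2 → ZMod 2 := fun u v => u * (v + 1)

/-- Interaction `g` of the symbolic model A:
`g(0,0) = 0`, `g(0,1) = g(1,0) = g(1,1) = 1`. -/
def gA : ZMod 2 → ZMod 2 → ZMod 2 := fun u v => u + v + u * v

open scoped Classical

/-- The limiting map `ψ^∞` of the symbolic model A: the first component of
`ψ^∞(a)` is `f(a₁,a₂)`, the second is `g(a₁,a₂)`, and for `n ≥ 3` the `n`-th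
component is `0` if `a₂ = ⋯ = aₙ = 0` and `1` otherwise.  (The `n`-th component
has index `n - 1`, and `aⱼ = a (j-1)`.) -/
noncomputable def psiInfA (a : ℕ → ZMod 2) : ℕ → ZMod 2 := fun i =>
  match i with
  | 0 => fA (a 0) (a 1)
  | 1 => gA (a 0) (a 1)
  | k + 2 => if ∀ j ∈ Finset.Icc 1 (k + 2), a j = 0 then 0 else 1

section Aux

lemma rg_zero (φ : (ℕ → ZMod 2) → (ℕ → ZMod 2)) (a : ℕ → ZMod 2) :
    RGop fA gA φ a 0 = fA (a 0) (a 1) := by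
  show (0 : ZMod 2) + fA (a 0) (a 1) = fA (a 0) (a 1)
  rw [zero_add]

lemma rg_one (φ : (ℕ → ZMod 2) → (ℕ → ZMod 2)) (a : ℕ → ZMod 2) :
    RGop fA gA φ a 1 = φ (φ (sigPlus a)) 0 + gA (a 0) (a 1) := rfl

lemma rg_two (φ : (ℕ → ZMod 2) → (ℕ → ZMod 2)) (a : ℕ → ZMod 2) (k : ℕ) :
    RGop fA gA φ a (k + 2) = φ (φ (sigPlus a)) (k + 1) + 0 := rfl

lemma L1 : ∀ x y : ZMod 2, fA (fA x y) (gA x y) = 0 := by decide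
lemma L2 : ∀ x y : ZMod 2, gA (fA x y) (gA x y) = if x = 0 ∧ y = 0 then 0 else 1 := by decide
lemma L3 : ∀ u v : ZMod 2, gA u v = 0 ↔ (u = 0 ∧ v = 0) := by decide
lemma L4 : ∀ x1 x2 x3 w : ZMod 2, fA (fA x1 x2) (fA (fA x2 x3) w + gA x1 x2) = 0 := by decide

lemma psiInf_two (a : ℕ → ZMod 2) (k : ℕ) :
    psiInfA a (k + 2)
      = @ite _ (∀ j ∈ Finset.Icc 1 (k + 2), a j = 0) (Classical.propDecidable _) 0 1 := rfl

lemma iteCongr {P Q : Prop} {iP : Decidable P} {iQ : Decidable Q} (h : P ↔ Q) {x y : ZMod 2} :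
    @ite _ P iP x y = @ite _ Q iQ x y := by
  cases iP with
  | isTrue hp =>
    cases iQ with
    | isTrue hq => rfl
    | isFalse hq => exact absurd (h.mp hp) hq
  | isFalse hp =>
    cases iQ with
    | isTrue hq => exact absurd (h.mpr hq) hp
    | isFalse hq => rfl

/-- `ψ∞` is a fixed point of the RG operator. -/
lemma fixedA : RGop fA gA psiInfA = psiInfA := by
  funext a i
  match i with
  | 0 => rw [rg_zero]; rfl
  | 1 =>
    rw [rg_one]
    have hc : psiInfA (psiInfA (sigPlus a)) 0 = fA (fA (a 1) (a 2)) (gA (a 1) (a 2)) := rfl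
    rw [hc, L1, zero_add]; rfl
  | 2 =>
    rw [rg_two, add_zero]
    have hc : psiInfA (psiInfA (sigPlus a)) 1 = gA (fA (a 1) (a 2)) (gA (a 1) (a 2)) := rfl
    rw [hc, L2, psiInf_two]
    refine iteCongr ?_
    constructor
    · rintro ⟨h1, h2⟩ j hj
      rw [Finset.mem_Icc] at hj
      obtain ⟨hj1, hj2⟩ := hj
      interval_cases j
      · exact h1
      · exact h2
    · intro h
      exact ⟨h 1 (by decide), h 2 (by decide)⟩
  | (k + 3) =>
    rw [rg_two, add_zero]
    set c := psiInfA (sigPlus a) with hc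
    have hcomp : psiInfA c (k + 2)
        = @ite _ (∀ j ∈ Finset.Icc 1 (k + 2), c j = 0) (Classical.propDecidable _) 0 1 := rfl
    rw [hcomp, psiInf_two]
    refine iteCongr ?_
    have hc1 : c 1 = gA (a 1) (a 2) := rfl
    have hct : ∀ t, c (t + 2)
        = @ite _ (∀ j ∈ Finset.Icc 1 (t + 2), a (j + 1) = 0) (Classical.propDecidable _) 0 1 :=
      fun t => rfl
    constructor
    · intro h j hj
      rw [Finset.mem_Icc] at hj
      have h1 : gA (a 1) (a 2) = 0 := by rw [← hc1]; exact h 1 (by simp)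
      obtain ⟨ha1, ha2⟩ := (L3 _ _).mp h1
      have h2 : c (k + 2) = 0 := h (k + 2) (by simp)
      rw [hct k] at h2
      have hcond : ∀ j ∈ Finset.Icc 1 (k + 2), a (j + 1) = 0 := by
        by_contra hcnt
        rw [if_neg hcnt] at h2
        exact one_ne_zero h2
      match j, hj with
      | 1, _ => exact ha1
      | (t + 2), ht =>
        have : t + 1 ∈ Finset.Icc 1 (k + 2) := by
          rw [Finset.mem_Icc]; omega
        exact hcond (t + 1) this
    · intro h j hj
      rw [Finset.mem_Icc] at hj
      match j, hj with
      | 1, _ =>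
        rw [hc1]
        have ha1 : a 1 = 0 := h 1 (by simp)
        have ha2 : a 2 = 0 := h 2 (by simp)
        rw [ha1, ha2]; decide
      | (t + 2), ht =>
        rw [hct t, if_pos]
        intro j' hj'
        rw [Finset.mem_Icc] at hj'
        apply h (j' + 1)
        rw [Finset.mem_Icc]; omega

/-- `ψ∞ a` at index `j` depends only on coordinates `≤ max 1 j` of `a`. -/
lemma psiInf_congr {c c' : ℕ → ZMod 2} (j : ℕ) (h : ∀ t, t ≤ max 1 j → c t = c' t) :
    psiInfA c j = psiInfA c' j := by
  have h0 : c 0 = c' 0 := h 0 (by simp)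
  have h1 : c 1 = c' 1 := h 1 (by simp)
  match j with
  | 0 => show fA (c 0) (c 1) = fA (c' 0) (c' 1); rw [h0, h1]
  | 1 => show gA (c 0) (c 1) = gA (c' 0) (c' 1); rw [h0, h1]
  | (k + 2) =>
    rw [psiInf_two, psiInf_two]
    refine iteCongr ?_
    have key : ∀ t ∈ Finset.Icc 1 (k + 2), c t = c' t := by
      intro t ht
      rw [Finset.mem_Icc] at ht
      exact h t (le_trans ht.2 (le_max_right _ _))
    constructor
    · intro H t ht; rw [← key t ht]; exact H t ht
    · intro H t ht; rw [key t ht]; exact H t ht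

/-- Propagation step: agreement up to `m ≥ 1` improves to `m + 1`. -/
lemma good_step (m : ℕ) (hm : 1 ≤ m) (φ : (ℕ → ZMod 2) → (ℕ → ZMod 2))
    (hφ : ∀ a i, i ≤ m → φ a i = psiInfA a i) :
    ∀ a i, i ≤ m + 1 → RGop fA gA φ a i = psiInfA a i := by
  intro a i hi
  match i with
  | 0 => rw [rg_zero]; rfl
  | (j + 1) =>
    have hj : j ≤ m := by omega
    have h1 : RGop fA gA φ a (j + 1) = φ (φ (sigPlus a)) j + xiMap fA gA a (j + 1) := rfl
    have h2 : φ (φ (sigPlus a)) j = psiInfA (φ (sigPlus a)) j := hφ _ j hj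
    have h3 : psiInfA (φ (sigPlus a)) j = psiInfA (psiInfA (sigPlus a)) j := by
      apply psiInf_congr j
      intro t ht
      exact hφ _ t (le_trans ht (max_le hm hj))
    have h4 : RGop fA gA psiInfA a (j + 1)
        = psiInfA (psiInfA (sigPlus a)) j + xiMap fA gA a (j + 1) := rfl
    rw [h1, h2, h3, ← h4, fixedA]

/-- After `m + 3` RG iterations the result agrees with `ψ∞` on coordinates `≤ m + 1`,
for an arbitrary starting map. -/
lemma good_iter : ∀ (m : ℕ) (ψ : (ℕ → ZMod 2) → (ℕ → ZMod 2)) (a : ℕ → ZMod 2) (i : ℕ),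
    i ≤ m + 1 → (RGop fA gA)^[m + 3] ψ a i = psiInfA a i := by
  intro m
  induction m with
  | zero =>
    intro ψ a i hi
    have e3 : (RGop fA gA)^[0 + 3] ψ = RGop fA gA (RGop fA gA (RGop fA gA ψ)) := rfl
    rw [e3]
    match i, hi with
    | 0, _ => rw [rg_zero]; rfl
    | 1, _ =>
      have h1 : RGop fA gA (RGop fA gA (RGop fA gA ψ)) a 1
          = RGop fA gA (RGop fA gA ψ) (RGop fA gA (RGop fA gA ψ) (sigPlus a)) 0
            + gA (a 0) (a 1) := rfl
      have h0 : RGop fA gA (RGop fA gA ψ) (RGop fA gA (RGop fA gA ψ) (sigPlus a)) 0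
          = fA (RGop fA gA (RGop fA gA ψ) (sigPlus a) 0)
              (RGop fA gA (RGop fA gA ψ) (sigPlus a) 1) := rg_zero _ _
      have hz : RGop fA gA (RGop fA gA ψ) (sigPlus a) 0 = fA (a 1) (a 2) := rg_zero _ _
      have ho : RGop fA gA (RGop fA gA ψ) (sigPlus a) 1
          = RGop fA gA ψ (RGop fA gA ψ (sigPlus (sigPlus a))) 0 + gA (a 1) (a 2) := rfl
      have hz2 : RGop fA gA ψ (RGop fA gA ψ (sigPlus (sigPlus a))) 0
          = fA (fA (a 2) (a 3)) (RGop fA gA ψ (sigPlus (sigPlus a)) 1) := by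
        rw [rg_zero, rg_zero ψ (sigPlus (sigPlus a))]
        rfl
      rw [h1, h0, hz, ho, hz2, L4, zero_add]
      rfl
  | succ m ih =>
    intro ψ a i hi
    have hidx : m + 1 + 3 = (m + 3) + 1 := by omega
    rw [hidx, Function.iterate_succ_apply']
    exact good_step (m + 1) (by omega) _ (fun a' i' h => ih ψ a' i' h) a i (by omega)

end Aux
/-- In the symbolic model A, for every continuous initial map
`ψ^{(1)}`, the RG iterates `ψ^{(N)} = R_g^{N-1}[ψ^{(1)}]` converge in the sense of
map convergence to `ψ^∞`, and `ψ^∞` is a fixed point of the RG operator. -/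
theorem statement7 (ψ1 : (ℕ → ZMod 2) → (ℕ → ZMod 2)) (hψ1 : Continuous ψ1) :
    MapConv (fun N => (RGop fA gA)^[N - 1] ψ1) psiInfA ∧
    RGop fA gA psiInfA = psiInfA := by
  refine ⟨?_, fixedA⟩
  intro aN a ha
  rw [tendsto_pi_nhds]
  intro i
  rw [nhds_discrete, tendsto_pure]
  have hcoord : ∀ t, ∀ᶠ N in atTop, aN N t = a t := by
    intro t
    have h := (tendsto_pi_nhds.mp ha) t
    rwa [nhds_discrete, tendsto_pure] at h
  have hall : ∀ᶠ N in atTop, ∀ t ∈ Finset.Iic (max 1 i), aN N t = a t :=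
    (eventually_all_finset _).mpr (fun t _ => hcoord t)
  filter_upwards [hall, eventually_ge_atTop (i + 4)] with N h1 h2
  have hN : N - 1 = (N - 4) + 3 := by omega
  rw [hN]
  have hgood := good_iter (N - 4) ψ1 (aN N) i (by omega)
  rw [hgood]
  exact psiInf_congr i (fun t ht => h1 t (Finset.mem_Iic.mpr ht))

end SSRG
end

section
/- For all N ≥ 2: p_n^(N) is a positive integer for every 2 ≤ n ≤ N; lim_{N→∞} p_2^(N) = ∞; and for every fixed n ≥ 2, lim_{N→∞} p_{n+1}^(N) / p_n^(N) = ∞. -/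
/-!
Read from the noise scale downwards, `q^{(N)}` is a field `coeff d m` (depth `d`, time step `m`)
that does not depend on `N`. At depth `d ≥ 1` it is nonnegative, `coeff d 2 = 2 ^ (d + 1)`, and it
grows by a factor of at least `2 ^ d` per time step: the recursion feeds in depth `d - 1` at twice the
rate, where the factor `2 ^ (2 (d - 1))` of two steps is at least `2 ^ d`. Substituting that growth
back into the recursion gives `p_{n+1}^{(N)} / p_n^{(N)} ≥ 2 ^ (N - n) - 1`, while `p_2^{(N)} = 2 ^ N`.
-/

open Filter Topology

namespace SSRG

/-- The integer-valued field recording the coefficient with which the noise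
variable `x₀` (placed at scale `N+1` at time `0`) enters the level-`N`
regularized solution of the phase model `uₙ(t) = 2uₙ(t-τₙ) + 2u_{n+1}(t-τₙ)`.
Here `q n m` stands for `qₙ^{(N)}(m·τₙ)`. -/
def QField (N : ℕ) (q : ℕ → ℕ → ℤ) : Prop :=
  (∀ n, 1 ≤ n → n ≤ N → q n 0 = 0) ∧
  (q (N + 1) 0 = 1) ∧
  (∀ m, 1 ≤ m → q (N + 1) m = 0) ∧
  (∀ n, N + 1 < n → ∀ m, q n m = 0) ∧
  (∀ n m, 1 ≤ n → n ≤ N → 1 ≤ m →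
    q n m = 2 * q n (m - 1) + 2 * q (n + 1) (2 * (m - 1)))

/-- `coeff d m = q_{N+1-d}^{(N)}(m·τ_{N+1-d})` for every `N ≥ d`; one time step at scale `n` is two
time steps at scale `n + 1`. -/
def coeff : ℕ → ℕ → ℤ
  | 0, 0 => 1
  | 0, _ + 1 => 0
  | _ + 1, 0 => 0
  | d + 1, m + 1 => 2 * coeff (d + 1) m + 2 * coeff d (2 * m)

@[simp] lemma coeff_zero_zero : coeff 0 0 = 1 := by simp [coeff]

@[simp] lemma coeff_zero_succ (m : ℕ) : coeff 0 (m + 1) = 0 := by simp [coeff]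

@[simp] lemma coeff_succ_zero (d : ℕ) : coeff (d + 1) 0 = 0 := by simp [coeff]

lemma coeff_succ_succ (d m : ℕ) :
    coeff (d + 1) (m + 1) = 2 * coeff (d + 1) m + 2 * coeff d (2 * m) := by
  rw [coeff]

lemma coeff_nonneg (d m : ℕ) : 0 ≤ coeff d m := by
  induction d, m using coeff.induct with
  | case4 d m ih₁ ih₂ => rw [coeff_succ_succ]; positivity
  | _ => simp

lemma two_mul_coeff_le_coeff_succ (d m : ℕ) : 2 * coeff (d + 1) m ≤ coeff (d + 1) (m + 1) := by
  rw [coeff_succ_succ]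
  linarith [coeff_nonneg d (2 * m)]

lemma coeff_succ_succ_one (d : ℕ) : coeff (d + 2) 1 = 0 := by
  simp [coeff_succ_succ]

lemma coeff_one_succ (m : ℕ) : coeff 1 (m + 1) = 2 ^ (m + 1) := by
  induction m with
  | zero => simp [coeff_succ_succ]
  | succ m ih =>
    rw [coeff_succ_succ, ih, show 2 * (m + 1) = 2 * m + 1 + 1 by ring, coeff_zero_succ]; ring

lemma coeff_succ_two (d : ℕ) : coeff (d + 1) 2 = 2 ^ (d + 2) := by
  induction d with
  | zero => exact coeff_one_succ 1
  | succ d ih => rw [coeff_succ_succ, coeff_succ_succ_one, ih]; ring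

lemma coeff_pos {d m : ℕ} (hd : 1 ≤ d) (hm : 2 ≤ m) : 0 < coeff d m := by
  obtain ⟨d, rfl⟩ := Nat.exists_eq_add_of_le' hd
  induction m, hm using Nat.le_induction with
  | base => rw [coeff_succ_two]; positivity
  | succ m _ ih => linarith [two_mul_coeff_le_coeff_succ d m]

lemma two_pow_mul_coeff_le_coeff_succ (d m : ℕ) :
    2 ^ (d + 1) * coeff (d + 1) (m + 1) ≤ coeff (d + 1) (m + 2) := by
  induction d generalizing m with
  | zero => simpa using two_mul_coeff_le_coeff_succ 0 (m + 1)
  | succ d ih =>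
    induction m with
    | zero => simpa [coeff_succ_succ_one] using coeff_nonneg (d + 2) 2
    | succ m ihm =>
      have hlower : 2 ^ (d + 2) * coeff (d + 1) (2 * (m + 1)) ≤ coeff (d + 1) (2 * (m + 2)) :=
        calc 2 ^ (d + 2) * coeff (d + 1) (2 * (m + 1))
            = 2 ^ (d + 1) * (2 * coeff (d + 1) (2 * m + 2)) := by ring_nf
          _ ≤ 2 ^ (d + 1) * coeff (d + 1) (2 * m + 3) := by
            gcongr; exact two_mul_coeff_le_coeff_succ d (2 * m + 2)
          _ ≤ coeff (d + 1) (2 * (m + 2)) := ih (2 * m + 2)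
      linear_combination 2 * ihm + 2 * hlower + 2 ^ (d + 2) * coeff_succ_succ (d + 1) (m + 1) -
        coeff_succ_succ (d + 1) (m + 2)

lemma QField.eq_coeff {N : ℕ} {q : ℕ → ℕ → ℤ} (hq : QField N q) {n : ℕ} (hn : 1 ≤ n)
    (hnN : n ≤ N + 1) (m : ℕ) : q n m = coeff (N + 1 - n) m := by
  obtain ⟨hzero, hsource, hsource_succ, -, hrec⟩ := hq
  obtain ⟨d, hd, rfl⟩ : ∃ d, d ≤ N ∧ n = N + 1 - d := ⟨N + 1 - n, by omega, by omega⟩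
  rw [Nat.sub_sub_self (by omega)]
  clear hn hnN
  induction d generalizing m with
  | zero =>
    cases m with
    | zero => simpa using hsource
    | succ m => simpa using hsource_succ (m + 1) (by omega)
  | succ d ih =>
    induction m with
    | zero => simpa using hzero _ (by omega) (by omega)
    | succ m ihm =>
      rw [hrec _ _ (by omega) (by omega) (by omega), Nat.add_sub_cancel, ihm,
        show N + 1 - (d + 1) + 1 = N + 1 - d by omega, ih (2 * m) (by omega), coeff_succ_succ]

lemma coeff_ratio_ge {k m : ℕ} (hk : 1 ≤ k) (hm : 2 ≤ m) :
    (2 : ℝ) ^ k - 1 ≤ coeff k (2 * m) / coeff (k + 1) m := by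
  obtain ⟨m, rfl⟩ := Nat.exists_eq_add_of_le' (by omega : 1 ≤ m)
  have hden : (0 : ℝ) < coeff (k + 1) (m + 1) := by exact_mod_cast coeff_pos (by omega) hm
  have hgrowth : (2 : ℝ) ^ (k + 1) * coeff (k + 1) (m + 1) ≤
      2 * coeff (k + 1) (m + 1) + 2 * coeff k (2 * (m + 1)) := by
    exact_mod_cast coeff_succ_succ k (m + 1) ▸ two_pow_mul_coeff_le_coeff_succ k m
  rw [le_div_iff₀ hden]
  linear_combination hgrowth / 2

/-- With `p_n^{(N)} = q_n^{(N)}(1/2) = q N n (2^(n-1))`: for all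
`N ≥ 2`, `p_n^{(N)}` is a positive integer for every `2 ≤ n ≤ N`;
`lim_{N→∞} p₂^{(N)} = ∞`; and for every fixed `n ≥ 2`,
`lim_{N→∞} p_{n+1}^{(N)} / p_n^{(N)} = ∞`. -/
theorem statement13 (q : ℕ → ℕ → ℕ → ℤ) (hq : ∀ N, 2 ≤ N → QField N (q N)) :
    (∀ N, 2 ≤ N → ∀ n, 2 ≤ n → n ≤ N → 0 < q N n (2 ^ (n - 1))) ∧
    Tendsto (fun N => q N 2 (2 ^ 1)) atTop atTop ∧
    (∀ n, 2 ≤ n →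
      Tendsto (fun N => (q N (n + 1) (2 ^ n) : ℝ) / (q N n (2 ^ (n - 1)) : ℝ))
        atTop atTop) := by
  have htime {n : ℕ} (hn : 2 ≤ n) : 2 ≤ 2 ^ (n - 1) := Nat.le_self_pow (by omega) 2
  refine ⟨fun N hN n hn hnN => ?_, ?_, fun n hn => ?_⟩
  · rw [(hq N hN).eq_coeff (by omega) (by omega)]
    exact coeff_pos (by omega) (htime hn)
  · refine (tendsto_pow_atTop_atTop_of_one_lt one_lt_two).congr' ?_
    filter_upwards [eventually_ge_atTop 2] with N hN
    rw [(hq N hN).eq_coeff (by omega) (by omega), show N + 1 - 2 = N - 2 + 1 by omega,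
      pow_one, coeff_succ_two, show N - 2 + 2 = N by omega]
  · have hbound : Tendsto (fun N => (2 : ℝ) ^ (N - n) - 1) atTop atTop :=
      (tendsto_atTop_add_const_right _ (-1)
        (tendsto_pow_atTop_atTop_of_one_lt one_lt_two)).comp (tendsto_sub_atTop_nat n)
    refine tendsto_atTop_mono' _ ?_ hbound
    filter_upwards [eventually_ge_atTop (n + 1)] with N hN
    have hN : 2 ≤ N := by omega
    rw [(hq N hN).eq_coeff (by omega) (by omega), (hq N hN).eq_coeff (by omega) (by omega),
      show N + 1 - n = N - n + 1 by omega, show N + 1 - (n + 1) = N - n by omega,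
      show 2 ^ n = 2 * 2 ^ (n - 1) by rw [← pow_succ']; congr 1; omega]
    exact coeff_ratio_ge (by omega) (htime hn)

end SSRG
end

section
/- Consider the symbolic model with functions f, g : {0,1}² → {0,1} satisfying f(0,0) = g(0,0) = 0 and g(1,0) = 0. For any boundary conditions (b_t) and any initial conditions a with n_max(0) < ∞ (i.e., a_n = 0 for all sufficiently large n), there exists a global-in-time strong solution (a strong solution on [0,∞)), it is unique, and it satisfies u_n(t) = 0 for all n > n_max(0) and all lattice times t. -/
open Filter Topology

namespace SSRG

variable {X : Type*}

/-- A global-in-time strong solution of the symbolic model: a weak solution such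
that, over every bounded time interval `[0,T]`, the leading scale number
`n_max(t) = sup{n : uₙ(t) = 1}` is uniformly bounded.  A lattice time is written
as `t = j·2^{-k}`; at any scale `n ≥ max(1,k)` it has time index `j·2^{n-k}`,
and `t ≤ T ↔ j ≤ T·2^k`. -/
def IsGlobalStrongSol (f g : ZMod 2 → ZMod 2 → ZMod 2) (a b : ℕ → ZMod 2)
    (u : ℕ → ℕ → ZMod 2) : Prop :=
  IsWeakSol f g a b u ∧
  ∀ T : ℕ, ∃ B : ℕ, ∀ k j n : ℕ, j ≤ T * 2 ^ k → 1 ≤ n → k ≤ n →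
    u n (j * 2 ^ (n - k)) = 1 → n ≤ B

/-!
Since `f 0 0 = 0` and `g x 0 = 0`, the ideal equation at scale `n` holds trivially for a field
whose rows `n` and `n + 1` vanish. Hence the regularized solution at scale `i`, extended by
zero above `i`, is a weak solution, and it is strong because its rows above `i` vanish.
Conversely, for a strong solution the bound on `n_max` over `[0, T]` makes all rows above some
`B` vanish on `[0, T]`; the ideal equations then propagate the vanishing down, one scale at a time,
to every scale above `i`, where the initial data vanish. A weak solution vanishing above `i` is
determined by the ideal equations, by induction on `m · 2 ^ (i + 1 - n)`, which decreases along
every dependency of the equation at `(n, m)`.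
-/

section

variable {X : Type*} [AddCommMonoid X] {f g : X → X → X}

lemma idealEq_iff_eq_zero {u : ℕ → ℕ → X} {n m : ℕ} (hf : f 0 0 = 0) (hg : ∀ x, g x 0 = 0)
    (h₁ : u n (m - 1) = 0) (h₂ : u (n + 1) (2 * (m - 1)) = 0) (h₃ : u n (m - 2) = 0) :
    IdealEq f g u n m ↔ u n m = 0 := by
  unfold IdealEq
  split_ifs <;> simp only [h₁, h₂, h₃, hf, hg, add_zero]

def depWeight (N n m : ℕ) : ℕ := m * 2 ^ (N + 1 - n)

lemma depWeight_lt_of_lt {N n m m' : ℕ} (h : m' < m) : depWeight N n m' < depWeight N n m :=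
  Nat.mul_lt_mul_of_pos_right h (Nat.two_pow_pos _)

lemma depWeight_succ_lt {N n m : ℕ} (hn : n ≤ N) (hm : 1 ≤ m) :
    depWeight N (n + 1) (2 * (m - 1)) < depWeight N n m := by
  have hexp : N + 1 - n = N + 1 - (n + 1) + 1 := by omega
  calc depWeight N (n + 1) (2 * (m - 1)) < depWeight N (n + 1) (2 * m) :=
        depWeight_lt_of_lt (by omega)
    _ = depWeight N n m := by unfold depWeight; rw [hexp, pow_succ]; ring

lemma depWeight_pred_lt {N n m : ℕ} (hn : 1 ≤ n) (hN : n ≤ N + 1) (hm : 1 ≤ m) :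
    depWeight N (n - 1) ((m - 2) / 2) < depWeight N n m := by
  have hexp : N + 1 - (n - 1) = N + 1 - n + 1 := by omega
  calc depWeight N (n - 1) ((m - 2) / 2) = depWeight N n ((m - 2) / 2 * 2) := by
        unfold depWeight; rw [hexp, pow_succ]; ring
    _ < depWeight N n m := depWeight_lt_of_lt (by omega)

def regSol (f g : X → X → X) (N : ℕ) (a b : ℕ → X) : ℕ → ℕ → X
  | 0, m => b m
  | n + 1, m =>
    if N < n + 1 then 0
    else if m = 0 then a n
    else if m % 2 = 1 then
      f (regSol f g N a b (n + 1) (m - 1)) (regSol f g N a b (n + 2) (2 * (m - 1)))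
    else
      f (regSol f g N a b (n + 1) (m - 1)) (regSol f g N a b (n + 2) (2 * (m - 1))) +
        g (regSol f g N a b n ((m - 2) / 2)) (regSol f g N a b (n + 1) (m - 2))
  termination_by n m => depWeight N n m
  decreasing_by
  all_goals first
    | exact depWeight_lt_of_lt (by omega)
    | exact depWeight_succ_lt (by omega) (by omega)
    | exact depWeight_pred_lt (n := n + 1) (by omega) (by omega) (by omega)

variable {N : ℕ} {a b : ℕ → X}

lemma regSol_zero_left (m : ℕ) : regSol f g N a b 0 m = b m := by
  rw [regSol]

lemma regSol_of_lt {n : ℕ} (hn : N < n) (m : ℕ) : regSol f g N a b n m = 0 := by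
  obtain ⟨n, rfl⟩ : ∃ n', n = n' + 1 := ⟨n - 1, by omega⟩
  rw [regSol, if_pos hn]

lemma regSol_zero_right {n : ℕ} (hn : 1 ≤ n) (hN : n ≤ N) :
    regSol f g N a b n 0 = a (n - 1) := by
  obtain ⟨n, rfl⟩ : ∃ n', n = n' + 1 := ⟨n - 1, by omega⟩
  rw [regSol, if_neg (by omega), if_pos rfl, Nat.add_sub_cancel]

lemma regSol_idealEq_of_le {n m : ℕ} (hn : 1 ≤ n) (hN : n ≤ N) (hm : 1 ≤ m) :
    IdealEq f g (regSol f g N a b) n m := by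
  obtain ⟨n, rfl⟩ : ∃ n', n = n' + 1 := ⟨n - 1, by omega⟩
  unfold IdealEq
  split_ifs with hodd <;> conv_lhs => rw [regSol]
  · rw [if_neg (by omega), if_neg (by omega), if_pos hodd]
  · rw [if_neg (by omega), if_neg (by omega), if_neg hodd, Nat.add_sub_cancel]

lemma isWeakSol_regSol (hf : f 0 0 = 0) (hg : ∀ x, g x 0 = 0)
    (ha : ∀ n, N < n → a (n - 1) = 0) : IsWeakSol f g a b (regSol f g N a b) := by
  refine ⟨regSol_zero_left, fun n hn => ?_, fun n m hn hm => ?_⟩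
  · rcases lt_or_ge N n with hNn | hnN
    · rw [regSol_of_lt hNn, ha n hNn]
    · exact regSol_zero_right hn hnN
  · rcases lt_or_ge N n with hNn | hnN
    · exact (idealEq_iff_eq_zero hf hg (regSol_of_lt hNn _) (regSol_of_lt (by omega) _)
        (regSol_of_lt hNn _)).2 (regSol_of_lt hNn _)
    · exact regSol_idealEq_of_le hn hnN hm

theorem IsWeakSol.eq_regSol {v : ℕ → ℕ → X} (hv : IsWeakSol f g a b v)
    (hvN : ∀ n, N < n → ∀ m, v n m = 0) : v = regSol f g N a b := by
  obtain ⟨hbdry, hinit, hideal⟩ := hv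
  suffices key : ∀ w n m, depWeight N n m = w → v n m = regSol f g N a b n m from
    funext fun n => funext fun m => key _ n m rfl
  intro w
  induction w using Nat.strong_induction_on with
  | _ w ih =>
  rintro n m rfl
  rcases Nat.eq_zero_or_pos n with rfl | hn
  · rw [hbdry, regSol_zero_left]
  rcases lt_or_ge N n with hNn | hnN
  · rw [hvN n hNn, regSol_of_lt hNn]
  rcases Nat.eq_zero_or_pos m with rfl | hm
  · rw [hinit n hn, regSol_zero_right hn hnN]
  have hveq := hideal n m hn hm
  have hueq := regSol_idealEq_of_le (f := f) (g := g) (a := a) (b := b) hn hnN hm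
  unfold IdealEq at hveq hueq
  rw [ih _ (depWeight_lt_of_lt (by omega)) n (m - 1) rfl,
    ih _ (depWeight_succ_lt hnN hm) (n + 1) _ rfl] at hveq
  split_ifs at hveq hueq
  · rw [hveq, hueq]
  · rw [ih _ (depWeight_pred_lt hn (by omega) hm) (n - 1) _ rfl,
      ih _ (depWeight_lt_of_lt (by omega)) n (m - 2) rfl] at hveq
    rw [hveq, hueq]

lemma IsWeakSol.row_eq_zero_of_succ {v : ℕ → ℕ → X} (hv : IsWeakSol f g a b v)
    (hf : f 0 0 = 0) (hg : ∀ x, g x 0 = 0) {n K : ℕ} (hn : 1 ≤ n) (ha : a (n - 1) = 0)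
    (hsucc : ∀ m ≤ 2 * K, v (n + 1) m = 0) : ∀ m ≤ K, v n m = 0 := by
  intro m
  induction m using Nat.strong_induction_on with
  | _ m ih =>
  intro hmK
  rcases Nat.eq_zero_or_pos m with rfl | hm
  · rw [hv.2.1 n hn, ha]
  exact (idealEq_iff_eq_zero hf hg (ih _ (by omega) (by omega)) (hsucc _ (by omega))
    (ih _ (by omega) (by omega))).1 (hv.2.2 n m hn hm)

end

lemma IsGlobalStrongSol.eq_zero_of_lt {f g : ZMod 2 → ZMod 2 → ZMod 2} {a b : ℕ → ZMod 2}
    {v : ℕ → ℕ → ZMod 2} (hv : IsGlobalStrongSol f g a b v) (hf : f 0 0 = 0)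
    (hg : ∀ x, g x 0 = 0) {i : ℕ} (ha : ∀ n, i < n → a (n - 1) = 0) :
    ∀ n, i < n → ∀ m, v n m = 0 := by
  intro n hin T
  obtain ⟨B, hB⟩ := hv.2 T
  have hhigh : ∀ n, B < n → ∀ m ≤ T * 2 ^ n, v n m = 0 := fun n hBn m hm => by
    by_contra hne
    have hone : v n m = 1 := Fin.eq_one_of_ne_zero _ hne
    have := hB n m n hm (by omega) le_rfl (by rwa [Nat.sub_self, pow_zero, mul_one])
    omega
  have hdown : ∀ d, ∀ n, i < n → B < n + d → ∀ m ≤ T * 2 ^ n, v n m = 0 := by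
    intro d
    induction d with
    | zero => exact fun n _ hBn => hhigh n hBn
    | succ d ih =>
      intro n hin hBn
      rcases lt_or_ge B n with hBn' | hnB
      · exact hhigh n hBn'
      refine hv.1.row_eq_zero_of_succ hf hg (by omega) (ha n hin) fun m hm => ?_
      exact ih (n + 1) (by omega) (by omega) m (by rw [pow_succ]; linarith)
  exact hdown B n hin (by omega) T (Nat.le_mul_of_pos_right T (Nat.two_pow_pos n))

lemma isGlobalStrongSol_of_eq_zero_of_lt {f g : ZMod 2 → ZMod 2 → ZMod 2} {a b : ℕ → ZMod 2}
    {u : ℕ → ℕ → ZMod 2} (hu : IsWeakSol f g a b u) {N : ℕ}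
    (huN : ∀ n, N < n → ∀ m, u n m = 0) : IsGlobalStrongSol f g a b u := by
  refine ⟨hu, fun _ => ⟨N, fun k j n _ _ _ h1 => ?_⟩⟩
  by_contra hNn
  rw [huN n (by omega)] at h1
  exact zero_ne_one h1

/-- In the symbolic model with `f(0,0) = g(0,0) = 0` and
`g(1,0) = 0`, for any boundary conditions `b` and any initial conditions `a`
with `n_max(0) < ∞` (i.e. `aₙ = a (n-1) = 0` for all `n > i`), there exists a
global-in-time strong solution, it is unique, and it satisfies `uₙ(t) = 0` for
all `n > n_max(0)` and all lattice times (stated for every finite bound `i` on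
the support of the initial condition, in particular for `i = n_max(0)`). -/
theorem statement14 (f g : ZMod 2 → ZMod 2 → ZMod 2)
    (hf00 : f 0 0 = 0) (hg00 : g 0 0 = 0) (hg10 : g 1 0 = 0)
    (a b : ℕ → ZMod 2) (i : ℕ) (hi : ∀ n, i < n → a (n - 1) = 0) :
    ∃ u : ℕ → ℕ → ZMod 2, IsGlobalStrongSol f g a b u ∧
      (∀ v, IsGlobalStrongSol f g a b v → v = u) ∧
      (∀ n, i < n → ∀ m, u n m = 0) := by
  have hg : ∀ x, g x 0 = 0 := fun x => by fin_cases x <;> assumption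
  refine ⟨regSol f g i a b, ?_, fun v hv => ?_, fun n hn => regSol_of_lt hn⟩
  · exact isGlobalStrongSol_of_eq_zero_of_lt (isWeakSol_regSol hf00 hg hi)
      fun n hn => regSol_of_lt hn
  · exact hv.1.eq_regSol (hv.eq_zero_of_lt hf00 hg hi)

end SSRG
end

section
/- For any functions f, g : {0,1}² → {0,1} and any initial conditions a and boundary conditions (b_t), there exists a global-in-time weak solution of the ideal symbolic system, i.e., a field defined at all points of the lattice L that satisfies the initial conditions, boundary conditions and ideal equations. -/
open Filter Topology

namespace SSRG

variable {X : Type*}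

/-- The regularized solution field, built by well-founded recursion on the
time `m·2^(N-n)` measured in units of `2^{-N}`. -/
def reg (f g : ZMod 2 → ZMod 2 → ZMod 2) (N : ℕ) (a b : ℕ → ZMod 2) :
    ℕ → ℕ → ZMod 2
  | n, m =>
    if h0 : n = 0 then b m
    else if hN : N < n then 0
    else if hm : m = 0 then a (n - 1)
    else if hp : m % 2 = 1 then
      f (reg f g N a b n (m - 1))
        (if hnN : n = N then 0 else reg f g N a b (n + 1) (2 * (m - 1)))
    else
      f (reg f g N a b n (m - 1))
        (if hnN : n = N then 0 else reg f g N a b (n + 1) (2 * (m - 1))) +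
      g (reg f g N a b (n - 1) ((m - 2) / 2)) (reg f g N a b n (m - 2))
  termination_by n m => m * 2 ^ (N - n)
  decreasing_by
  all_goals simp_wf
  all_goals first
  | omega
  | (have hx : 2 ^ (N - n) = 2 * 2 ^ (N - (n + 1)) := by
       rw [← pow_succ']; congr 1; omega
     rw [hx]
     have hpos : 0 < 2 ^ (N - (n + 1)) := pow_pos (by norm_num) _
     have hm1 : m - 1 + 1 = m := by omega
     nlinarith [hpos, hm1])
  | (have hx : 2 ^ (N - (n - 1)) = 2 * 2 ^ (N - n) := by
       rw [← pow_succ']; congr 1; omega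
     rw [hx]
     have hpos : 0 < 2 ^ (N - n) := pow_pos (by norm_num) _
     have hd : (m - 2) / 2 * 2 ≤ m - 2 := Nat.div_mul_le_self _ _
     have hm2 : m - 2 + 2 = m := by omega
     nlinarith [hpos, hd, hm2, mul_le_mul_of_nonneg_right hd (Nat.zero_le (2 ^ (N - n)))])

lemma reg_row0 (f g : ZMod 2 → ZMod 2 → ZMod 2) (N : ℕ) (a b : ℕ → ZMod 2) (m : ℕ) :
    reg f g N a b 0 m = b m := by
  rw [reg, dif_pos rfl]

lemma reg_gt (f g : ZMod 2 → ZMod 2 → ZMod 2) (N : ℕ) (a b : ℕ → ZMod 2) {n : ℕ} (m : ℕ)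
    (h : N < n) : reg f g N a b n m = 0 := by
  rw [reg, dif_neg (by omega : ¬ n = 0), dif_pos h]

lemma reg_init (f g : ZMod 2 → ZMod 2 → ZMod 2) (N : ℕ) (a b : ℕ → ZMod 2) {n : ℕ}
    (h1 : 1 ≤ n) (h2 : n ≤ N) : reg f g N a b n 0 = a (n - 1) := by
  rw [reg, dif_neg (by omega : ¬ n = 0), dif_neg (by omega : ¬ N < n), dif_pos rfl]

lemma reg_ideal (f g : ZMod 2 → ZMod 2 → ZMod 2) (N : ℕ) (a b : ℕ → ZMod 2) {n m : ℕ}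
    (h1 : 1 ≤ n) (h2 : n ≤ N) (hm : 1 ≤ m) : IdealEq f g (reg f g N a b) n m := by
  have h0 : ¬ n = 0 := by omega
  have hN : ¬ N < n := by omega
  have hm0 : ¬ m = 0 := by omega
  have hside : (if _ : n = N then (0 : ZMod 2) else reg f g N a b (n + 1) (2 * (m - 1)))
      = reg f g N a b (n + 1) (2 * (m - 1)) := by
    split
    · next h => rw [reg_gt _ _ _ _ _ _ (by omega)]
    · rfl
  unfold IdealEq
  by_cases hp : m % 2 = 1
  · rw [if_pos hp]
    conv_lhs => rw [reg]
    rw [dif_neg h0, dif_neg hN, dif_neg hm0, dif_pos hp, hside]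
  · rw [if_neg hp]
    conv_lhs => rw [reg]
    rw [dif_neg h0, dif_neg hN, dif_neg hm0, dif_neg hp, hside]


/-- For any interaction functions `f, g : {0,1}² → {0,1}` and
any initial conditions `a` and boundary conditions `b`, there exists a
global-in-time weak solution of the ideal symbolic system, i.e. a field defined
at all points of the lattice satisfying the initial conditions, the boundary
conditions and the ideal equations. -/
theorem statement16 (f g : ZMod 2 → ZMod 2 → ZMod 2) (a b : ℕ → ZMod 2) :
    ∃ u : ℕ → ℕ → ZMod 2, IsWeakSol f g a b u := by
  classical
  set U : Ultrafilter ℕ := Filter.hyperfilter ℕ with hU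
  set v : ℕ → ℕ → ℕ → ZMod 2 := fun N => reg f g N a b with hv
  set u : ℕ → ℕ → ZMod 2 :=
    fun n m => if (∀ᶠ N in (U : Filter ℕ), v N n m = 1) then 1 else 0 with hu
  have hev : ∀ n m, ∀ᶠ N in (U : Filter ℕ), v N n m = u n m := by
    intro n m
    by_cases h : ∀ᶠ N in (U : Filter ℕ), v N n m = 1
    · have : u n m = 1 := by rw [hu]; simp [h]
      rw [this]; exact h
    · have h' : ∀ᶠ N in (U : Filter ℕ), ¬ v N n m = 1 :=
        (Ultrafilter.eventually_not).2 h
      have : u n m = 0 := by rw [hu]; simp [h]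
      rw [this]
      filter_upwards [h'] with N hN
      revert hN
      have : ∀ x : ZMod 2, ¬ x = 1 → x = 0 := by decide
      exact this _
  have hatTop : ∀ k, ∀ᶠ N in (U : Filter ℕ), k ≤ N := fun k =>
    (Filter.eventually_ge_atTop k).filter_mono Nat.hyperfilter_le_atTop
  refine ⟨u, ?_, ?_, ?_⟩
  · intro m
    obtain ⟨N, hN⟩ := (hev 0 m).exists
    rw [← hN]
    exact reg_row0 f g N a b m
  · intro n hn
    obtain ⟨N, h1, h2⟩ := ((hev n 0).and (hatTop n)).exists
    rw [← h1]
    exact reg_init f g N a b hn h2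
  · intro n m hn hm
    obtain ⟨N, e0, e1, e2, e3, e4, hN⟩ :=
      ((hev n m).and ((hev n (m - 1)).and ((hev (n + 1) (2 * (m - 1))).and
        ((hev (n - 1) ((m - 2) / 2)).and ((hev n (m - 2)).and (hatTop n)))))).exists
    have hI := reg_ideal f g N a b hn hN hm
    unfold IdealEq at hI ⊢
    simp only [hv] at e0 e1 e2 e3 e4
    rw [e0, e1, e2, e3, e4] at hI
    exact hI


end SSRG
end

section
/- In symbolic model B, let a be initial conditions with i := n_max(0) < ∞ and (b_t) boundary conditions such that the blowup time T is finite, where T = t_bc + 2 if i = 0 and T = 2^{1−i} if i ≥ 1. Then: (i) any two weak solutions coincide at every lattice point (n,t) with t ≤ T; and (ii) there exist two weak solutions that differ at some lattice point with t > T. -/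
open Filter Topology

namespace SSRG

variable {X : Type*}

open ENNReal

/-- Interaction `f` of the symbolic model B:
`f(0,0) = f(0,1) = f(1,0) = 0`, `f(1,1) = 1`. -/
def fB : ZMod 2 → ZMod 2 → ZMod 2 := fun u v => u * v

/-- Interaction `g` of the symbolic model B:
`g(0,0) = g(1,1) = 0`, `g(0,1) = g(1,0) = 1`. -/
def gB : ZMod 2 → ZMod 2 → ZMod 2 := fun u v => u + v

/-- The time `t_bc = sup{s ≥ 0 : b_j = 0 for all integers 0 ≤ j < s} ∈ [0,∞]` at
which the boundary condition becomes active. -/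
noncomputable def tbc (b : ℕ → ZMod 2) : ℝ≥0∞ :=
  sSup {s : ℝ≥0∞ | ∀ j : ℕ, (j : ℝ≥0∞) < s → b j = 0}

/-!
Before the blowup time `T = K / 2 ^ N0` the field is driven by a single front. Starting from the
first `1` of the data, which sits on row `N0` at time `T - 2τ_{N0}`, every finer row `n` vanishes
up to time `T - 3τ_n`, equals `1` at `T - 2τ_n` and `0` at `T - τ_n`. So up to time `T` the
product `f(u_n, u_{n+1})`, the only term of the ideal equations that reaches to a finer scale,
vanishes, and the solution is determined by the data. At time `T` every row from `N0 + 2` on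
equals `1`, after which the ideal equations only say `u_n(T + 2τ_n) = u_{n+1}(T + 2τ_{n+1})`:
nothing determines the value along this ray. Regularized solutions whose top row is `0`, or is
switched on from time `T`, have ray value `0`, resp. `1`, and their ultrafilter limits are two weak
solutions that differ there.
-/

section Regularization

variable [AddCommMonoid X]

-- Rows above `N` are prescribed by `top` (`IsRegSol` is the case `top = 0`). Every value refers
-- only to strictly earlier times, counted here in units of `τ_{N+1}`.
def regField (f g : X → X → X) (top : ℕ → ℕ → X) (N : ℕ) (a b : ℕ → X)
    (n m : ℕ) : X :=
  if n = 0 then b m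
  else if N < n then top n m
  else if m = 0 then a (n - 1)
  else if m % 2 = 1 then
    f (regField f g top N a b n (m - 1)) (regField f g top N a b (n + 1) (2 * (m - 1)))
  else
    f (regField f g top N a b n (m - 1)) (regField f g top N a b (n + 1) (2 * (m - 1))) +
      g (regField f g top N a b (n - 1) ((m - 2) / 2)) (regField f g top N a b n (m - 2))
termination_by m * 2 ^ (N + 1 - n)
decreasing_by
  all_goals
    obtain ⟨d, hd⟩ : ∃ d, N + 1 - n = d + 1 := ⟨N - n, by omega⟩
    rw [hd]
  all_goals first
    | exact Nat.mul_lt_mul_of_pos_right (by omega) (by positivity)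
    | rw [show N + 1 - (n + 1) = d by omega,
        show 2 * (m - 1) * 2 ^ d = (m - 1) * 2 ^ (d + 1) by ring]
      exact Nat.mul_lt_mul_of_pos_right (by omega) (by positivity)
    | rw [show N + 1 - (n - 1) = d + 1 + 1 by omega,
        show (m - 2) / 2 * 2 ^ (d + 1 + 1) = (m - 2) / 2 * 2 * 2 ^ (d + 1) by ring]
      exact Nat.mul_lt_mul_of_pos_right (by omega) (by positivity)

variable {f g : X → X → X} {top : ℕ → ℕ → X} {N : ℕ} {a b : ℕ → X} {n m : ℕ}

theorem regField_zero_left (m : ℕ) : regField f g top N a b 0 m = b m := by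
  rw [regField, if_pos rfl]

theorem regField_of_lt (h : N < n) : regField f g top N a b n m = top n m := by
  rw [regField, if_neg (by omega), if_pos h]

theorem regField_zero_right (h1 : 1 ≤ n) (h2 : n ≤ N) :
    regField f g top N a b n 0 = a (n - 1) := by
  rw [regField, if_neg (by omega), if_neg (by omega), if_pos rfl]

theorem idealEq_regField (h1 : 1 ≤ n) (h2 : n ≤ N) (hm : 1 ≤ m) :
    IdealEq f g (regField f g top N a b) n m := by
  unfold IdealEq
  split_ifs with hodd
  · rw [regField, if_neg (by omega), if_neg (by omega), if_neg (by omega), if_pos hodd]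
  · rw [regField, if_neg (by omega), if_neg (by omega), if_neg (by omega), if_neg hodd]

end Regularization

theorem exists_isWeakSol_of_eventually [Finite X] [AddCommMonoid X] {f g : X → X → X}
    {a b : ℕ → X} {w : ℕ → ℕ → ℕ → X} (hb : ∀ N m, w N 0 m = b m)
    (ha : ∀ N n, 1 ≤ n → n ≤ N → w N n 0 = a (n - 1))
    (heq : ∀ N n m, 1 ≤ n → n ≤ N → 1 ≤ m → IdealEq f g (w N) n m) :
    ∃ u, IsWeakSol f g a b u ∧ ∀ n m c, (∀ᶠ N in atTop, w N n m = c) → u n m = c := by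
  set U : Ultrafilter ℕ := Ultrafilter.of atTop
  have hlim : ∀ n m, ∃ c, ∀ᶠ N in (U : Filter ℕ), w N n m = c := by
    intro n m
    obtain ⟨c, hc⟩ := (U.map fun N => w N n m).eq_pure_of_finite
    have hmem : ({c} : Set X) ∈ U.map fun N => w N n m := by
      rw [hc]
      exact Ultrafilter.mem_pure.mpr rfl
    exact ⟨c, Ultrafilter.mem_map.mp hmem⟩
  choose u hu using hlim
  have hge : ∀ n, ∀ᶠ N in (U : Filter ℕ), n ≤ N :=
    fun n => Ultrafilter.of_le atTop (eventually_ge_atTop n)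
  refine ⟨u, ⟨fun m => ?_, fun n hn => ?_, fun n m hn hm => ?_⟩, fun n m c hc => ?_⟩
  · obtain ⟨N, hN⟩ := (hu 0 m).exists
    rw [← hN, hb]
  · obtain ⟨N, hN, hnN⟩ := ((hu n 0).and (hge n)).exists
    rw [← hN, ha N n hn hnN]
  · obtain ⟨N, hnN, e0, e1, e2, e3, e4⟩ := ((hge n).and <| (hu n m).and <|
      (hu n (m - 1)).and <| (hu (n + 1) (2 * (m - 1))).and <|
      (hu (n - 1) ((m - 2) / 2)).and (hu n (m - 2))).exists
    have h := heq N n m hn hnN hm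
    unfold IdealEq at h ⊢
    rwa [e0, e1, e2, e3, e4] at h
  · obtain ⟨N, hN, hcN⟩ := ((hu n m).and (Ultrafilter.of_le atTop hc)).exists
    rw [← hN, hcN]

-- The interaction `f (u n (m - 1)) (u (n + 1) _)` is the only term of the ideal equations that
-- reaches to a finer scale; every other term lies earlier on the same row or on a coarser row.
theorem IsWeakSol.eq_of_interaction_eq [AddCommMonoid X] {f g : X → X → X} {a b : ℕ → X}
    {u v : ℕ → ℕ → X} (hu : IsWeakSol f g a b u) (hv : IsWeakSol f g a b v) (N0 K : ℕ)
    (hf : ∀ n m, 1 ≤ n → 2 ≤ m → m * 2 ^ N0 ≤ K * 2 ^ n →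
      f (u n (m - 1)) (u (n + 1) (2 * (m - 1))) = f (v n (m - 1)) (v (n + 1) (2 * (m - 1)))) :
    ∀ n m, 1 ≤ n → m * 2 ^ N0 ≤ K * 2 ^ n → u n m = v n m := by
  intro n
  induction n using Nat.strong_induction_on with
  | _ n ihn =>
  intro m
  induction m using Nat.strong_induction_on with
  | _ m ihm =>
  intro hn hT
  have hT' : ∀ m' ≤ m, m' * 2 ^ N0 ≤ K * 2 ^ n :=
    fun m' hm' => (Nat.mul_le_mul_right _ hm').trans hT
  rcases Nat.lt_or_ge m 2 with hm | hm
  · have hinit : ∀ n, 1 ≤ n → u n 0 = v n 0 :=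
      fun n hn => (hu.2.1 n hn).trans (hv.2.1 n hn).symm
    interval_cases m
    · exact hinit n hn
    · have eu := hu.2.2 n 1 hn le_rfl
      have ev := hv.2.2 n 1 hn le_rfl
      simp only [IdealEq, Nat.one_mod, if_true, Nat.sub_self, mul_zero] at eu ev
      rw [eu, ev, hinit n hn, hinit (n + 1) (by omega)]
  · have eu := hu.2.2 n m hn (by omega)
    have ev := hv.2.2 n m hn (by omega)
    unfold IdealEq at eu ev
    split_ifs at eu ev
    · rw [eu, ev, hf n m hn hm hT]
    · have hprev : u (n - 1) ((m - 2) / 2) = v (n - 1) ((m - 2) / 2) := by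
        rcases Nat.eq_or_lt_of_le hn with rfl | hn2
        · exact (hu.1 _).trans (hv.1 _).symm
        refine ihn (n - 1) (by omega) _ (by omega) ?_
        have h2n : 2 ^ n = 2 * 2 ^ (n - 1) := by rw [← pow_succ']; congr 1; omega
        refine Nat.le_of_mul_le_mul_left ?_ two_pos
        calc 2 * ((m - 2) / 2 * 2 ^ N0) = 2 * ((m - 2) / 2) * 2 ^ N0 := by ring
          _ ≤ K * 2 ^ n := hT' _ (by omega)
          _ = 2 * (K * 2 ^ (n - 1)) := by rw [h2n]; ring
      rw [eu, ev, hf n m hn hm hT, hprev, ihm (m - 2) (by omega) hn (hT' _ (by omega))]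

theorem natCast_div_two_pow_le_iff {m n K N0 : ℕ} :
    (m : ℝ≥0∞) / 2 ^ n ≤ K / 2 ^ N0 ↔ m * 2 ^ N0 ≤ K * 2 ^ n := by
  have h0 (k : ℕ) : (2 : ℝ≥0∞) ^ k ≠ 0 := pow_ne_zero _ two_ne_zero
  have htop (k : ℕ) : (2 : ℝ≥0∞) ^ k ≠ ⊤ := pow_ne_top ofNat_ne_top
  rw [ENNReal.div_le_iff (h0 n) (htop n), mul_comm, ← mul_div_assoc,
    ENNReal.le_div_iff_mul_le (Or.inl (h0 N0)) (Or.inl (htop N0))]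
  rw [mul_comm (2 ^ n)]
  exact_mod_cast Iff.rfl

section ModelB

variable {u v : ℕ → ℕ → ZMod 2} {a b : ℕ → ZMod 2} {N0 K D n m k : ℕ}

theorem IdealEq.eq_mul_of_odd (h : IdealEq fB gB u n m) (hm : m % 2 = 1) :
    u n m = u n (m - 1) * u (n + 1) (2 * (m - 1)) := by
  rwa [IdealEq, if_pos hm] at h

theorem IdealEq.eq_mul_add_of_even (h : IdealEq fB gB u n m) (hm : m % 2 = 0) :
    u n m = u n (m - 1) * u (n + 1) (2 * (m - 1)) + (u (n - 1) ((m - 2) / 2) + u n (m - 2)) := by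
  rwa [IdealEq, if_neg (by omega)] at h

-- The first `1` of the data sits on the source row `N0` at index `K - 2`; the rows `N0 + k`,
-- `1 ≤ k ≤ D`, start from `0` and obey the ideal equations. The time `T = K / 2 ^ N0` has index
-- `K * 2 ^ k` on row `N0 + k`.
structure FrontData (u : ℕ → ℕ → ZMod 2) (N0 K D : ℕ) : Prop where
  two_le : 2 ≤ K
  source_zero : ∀ j, j + 3 ≤ K → u N0 j = 0
  source_one : u N0 (K - 2) = 1
  init_zero : ∀ k, 1 ≤ k → k ≤ D → u (N0 + k) 0 = 0
  idealEq : ∀ k m, 1 ≤ k → k ≤ D → 1 ≤ m → IdealEq fB gB u (N0 + k) m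

namespace FrontData

theorem eq_of_odd (h : FrontData u N0 K D) (hk : 1 ≤ k) (hkD : k ≤ D) (hm : m % 2 = 1) :
    u (N0 + k) m = u (N0 + k) (m - 1) * u (N0 + (k + 1)) (2 * (m - 1)) :=
  (h.idealEq k m hk hkD (by omega)).eq_mul_of_odd hm

theorem eq_of_even (h : FrontData u N0 K D) (hk : 1 ≤ k) (hkD : k ≤ D) (hm2 : 2 ≤ m)
    (hm : m % 2 = 0) :
    u (N0 + k) m = u (N0 + k) (m - 1) * u (N0 + (k + 1)) (2 * (m - 1)) +
      (u (N0 + (k - 1)) ((m - 2) / 2) + u (N0 + k) (m - 2)) := by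
  rw [← Nat.add_sub_assoc hk]
  exact (h.idealEq k m hk hkD (by omega)).eq_mul_add_of_even hm

theorem two_le_mul_two_pow (h : FrontData u N0 K D) (k : ℕ) : 2 ≤ K * 2 ^ k :=
  le_mul_of_le_of_one_le h.two_le Nat.one_le_two_pow

theorem eq_zero (h : FrontData u N0 K D) :
    ∀ k ≤ D, ∀ m, m + 3 ≤ K * 2 ^ k → u (N0 + k) m = 0 := by
  intro k
  induction k with
  | zero => intro _ m hm; simpa using h.source_zero m (by simpa using hm)
  | succ k ih =>
    intro hkD m
    induction m using Nat.strong_induction_on with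
    | _ m ihm =>
    intro hm
    have hs : K * 2 ^ (k + 1) = 2 * (K * 2 ^ k) := by ring
    rcases Nat.eq_zero_or_pos m with rfl | hm0
    · exact h.init_zero (k + 1) (by omega) hkD
    rcases Nat.mod_two_eq_zero_or_one m with hpar | hpar
    · rw [h.eq_of_even (by omega) hkD (by omega) hpar, ihm (m - 1) (by omega) (by omega),
        ihm (m - 2) (by omega) (by omega), Nat.add_sub_cancel,
        ih (by omega) ((m - 2) / 2) (by omega)]
      ring
    · rw [h.eq_of_odd (by omega) hkD hpar, ihm (m - 1) (by omega) (by omega), zero_mul]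

theorem front_eq_one (h : FrontData u N0 K D) : ∀ k ≤ D, u (N0 + k) (K * 2 ^ k - 2) = 1 := by
  intro k
  induction k with
  | zero => intro _; simpa using h.source_one
  | succ k ih =>
    intro hkD
    have hs : K * 2 ^ (k + 1) = 2 * (K * 2 ^ k) := by ring
    have := h.two_le_mul_two_pow k
    rw [h.eq_of_even (by omega) hkD (by omega) (by omega),
      h.eq_zero (k + 1) hkD (K * 2 ^ (k + 1) - 2 - 1) (by omega), Nat.add_sub_cancel,
      show (K * 2 ^ (k + 1) - 2 - 2) / 2 = K * 2 ^ k - 2 by omega, ih (by omega),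
      h.eq_zero (k + 1) hkD (K * 2 ^ (k + 1) - 2 - 2) (by omega)]
    ring

-- `htop` replaces `eq_zero` on the row `N0 + D + 1`, which `FrontData` does not control.
theorem eq_zero_pred (h : FrontData u N0 K D)
    (htop : u (N0 + D + 1) (K * 2 ^ (D + 1) - 4) = 0)
    (hk : 1 ≤ k) (hkD : k ≤ D) : u (N0 + k) (K * 2 ^ k - 1) = 0 := by
  have hs : K * 2 ^ (k + 1) = 2 * (K * 2 ^ k) := by ring
  have hs' : K * 2 ^ k = 2 * (K * 2 ^ (k - 1)) := by
    rw [mul_left_comm, ← pow_succ', Nat.sub_add_cancel hk]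
  have := h.two_le_mul_two_pow (k - 1)
  have hnext : u (N0 + (k + 1)) (K * 2 ^ (k + 1) - 4) = 0 := by
    rcases Nat.lt_or_ge k D with hlt | hge
    · exact h.eq_zero (k + 1) hlt _ (by omega)
    · obtain rfl : k = D := by omega
      exact htop
  rw [h.eq_of_odd hk hkD (by omega),
    show 2 * (K * 2 ^ k - 1 - 1) = K * 2 ^ (k + 1) - 4 by omega, hnext, mul_zero]

theorem blowup_eq_one (h : FrontData u N0 K D)
    (htop : u (N0 + D + 1) (K * 2 ^ (D + 1) - 4) = 0)
    (hk : 2 ≤ k) (hkD : k ≤ D) : u (N0 + k) (K * 2 ^ k) = 1 := by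
  have hs' : K * 2 ^ k = 2 * (K * 2 ^ (k - 1)) := by
    rw [mul_left_comm, ← pow_succ', Nat.sub_add_cancel (by omega : 1 ≤ k)]
  have := h.two_le_mul_two_pow (k - 1)
  rw [h.eq_of_even (by omega) hkD (by omega) (by omega), h.eq_zero_pred htop (by omega) hkD,
    zero_mul, show (K * 2 ^ k - 2) / 2 = K * 2 ^ (k - 1) - 1 by omega,
    h.eq_zero_pred htop (by omega) (by omega), h.front_eq_one k hkD]
  ring

theorem ray_step (h : FrontData u N0 K D)
    (htop : u (N0 + D + 1) (K * 2 ^ (D + 1) - 4) = 0)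
    (hk : 3 ≤ k) (hkD : k ≤ D) :
    u (N0 + k) (K * 2 ^ k + 2) =
      u (N0 + (k + 1)) (K * 2 ^ (k + 1)) * u (N0 + (k + 1)) (K * 2 ^ (k + 1) + 2) := by
  have hs : K * 2 ^ (k + 1) = 2 * (K * 2 ^ k) := by ring
  have hs' : K * 2 ^ k = 2 * (K * 2 ^ (k - 1)) := by
    rw [mul_left_comm, ← pow_succ', Nat.sub_add_cancel (by omega : 1 ≤ k)]
  have hodd : u (N0 + k) (K * 2 ^ k + 1) = u (N0 + (k + 1)) (K * 2 ^ (k + 1)) := by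
    rw [h.eq_of_odd (by omega) hkD (by omega), Nat.add_sub_cancel, ← hs,
      h.blowup_eq_one htop (by omega) hkD, one_mul]
  rw [h.eq_of_even (by omega) hkD (by omega) (by omega),
    show K * 2 ^ k + 2 - 1 = K * 2 ^ k + 1 by omega,
    hodd, show 2 * (K * 2 ^ k + 1) = K * 2 ^ (k + 1) + 2 by omega,
    show (K * 2 ^ k + 2 - 2) / 2 = K * 2 ^ (k - 1) by omega, Nat.add_sub_cancel,
    h.blowup_eq_one (k := k - 1) htop (by omega) (by omega),
    h.blowup_eq_one (k := k) htop (by omega) hkD]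
  rw [show (1 : ZMod 2) + 1 = 0 from rfl, add_zero]

theorem ray_eq_top (h : FrontData u N0 K D)
    (htop : u (N0 + D + 1) (K * 2 ^ (D + 1) - 4) = 0)
    (hk : 3 ≤ k) (hkD : k ≤ D) :
    u (N0 + k) (K * 2 ^ k + 2) =
      u (N0 + D + 1) (K * 2 ^ (D + 1)) * u (N0 + D + 1) (K * 2 ^ (D + 1) + 2) := by
  suffices ∀ j k, 3 ≤ k → k + j = D → u (N0 + k) (K * 2 ^ k + 2) =
      u (N0 + D + 1) (K * 2 ^ (D + 1)) * u (N0 + D + 1) (K * 2 ^ (D + 1) + 2) from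
    this (D - k) k hk (by omega)
  intro j
  induction j with
  | zero =>
    intro k hk hkj
    obtain rfl : k = D := hkj
    exact h.ray_step htop hk le_rfl
  | succ j ih =>
    intro k hk hkj
    rw [h.ray_step htop hk (by omega), h.blowup_eq_one htop (by omega) (by omega), one_mul]
    exact ih (k + 1) (by omega) (by omega)

end FrontData

-- The first `1` of the data: on the boundary at time `k = t_bc` (case `i = 0`), or the initial
-- value `a i` on row `i + 1`. In both cases it sits on row `N0` at time `T - 2τ_{N0}`, where
-- `T = K / 2 ^ N0` is the blowup time.
inductive BlowupSeed (a b : ℕ → ZMod 2) : ℕ → ℕ → Prop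
  | boundary (k : ℕ) (ha : ∀ j, a j = 0) (hb : ∀ j < k, b j = 0) (hbk : b k = 1) :
      BlowupSeed a b 0 (k + 2)
  | initial (i : ℕ) (ha : ∀ j, i < j → a j = 0) (hai : a i = 1) : BlowupSeed a b (i + 1) 2

namespace BlowupSeed

theorem frontData (hs : BlowupSeed a b N0 K) (hb : ∀ m, u 0 m = b m)
    (ha : ∀ n, 1 ≤ n → n ≤ N0 + D → u n 0 = a (n - 1))
    (heq : ∀ n m, 1 ≤ n → n ≤ N0 + D → 1 ≤ m → IdealEq fB gB u n m) :
    FrontData u N0 K D := by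
  have hideal : ∀ k m, 1 ≤ k → k ≤ D → 1 ≤ m → IdealEq fB gB u (N0 + k) m :=
    fun k m hk hkD hm => heq _ m (by omega) (by omega) hm
  cases hs with
  | boundary k ha' hb' hbk =>
    refine ⟨by omega, fun j hj => ?_, ?_, fun k hk hkD => ?_, hideal⟩
    · rw [hb, hb' j (by omega)]
    · rwa [Nat.add_sub_cancel, hb]
    · rw [ha _ (by omega) (by omega), ha']
  | initial i ha' hai =>
    refine ⟨le_rfl, fun j hj => by omega, ?_, fun k hk hkD => ?_, hideal⟩
    · rw [ha _ (by omega) (by omega), Nat.add_sub_cancel, hai]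
    · rw [ha _ (by omega) (by omega), ha' _ (by omega)]

theorem frontData_of_isWeakSol (hs : BlowupSeed a b N0 K) (hu : IsWeakSol fB gB a b u)
    (D : ℕ) : FrontData u N0 K D :=
  hs.frontData hu.1 (fun n hn _ => hu.2.1 n hn) (fun n m hn _ hm => hu.2.2 n m hn hm)

theorem frontData_regField (hs : BlowupSeed a b N0 K) (top : ℕ → ℕ → ZMod 2) (D : ℕ) :
    FrontData (regField fB gB top (N0 + D) a b) N0 K D :=
  hs.frontData regField_zero_left (fun _ h1 h2 => regField_zero_right h1 h2)
    (fun _ _ h1 h2 hm => idealEq_regField h1 h2 hm)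

theorem two_le (hs : BlowupSeed a b N0 K) : 2 ≤ K := by
  cases hs <;> omega

theorem eq_zero_or_eq_two (hs : BlowupSeed a b N0 K) : N0 = 0 ∨ K = 2 := by
  cases hs
  · exact Or.inl rfl
  · exact Or.inr rfl

theorem interaction_eq_zero (hs : BlowupSeed a b N0 K) (hu : IsWeakSol fB gB a b u) (hn : 1 ≤ n)
    (hm : 2 ≤ m) (hT : m * 2 ^ N0 ≤ K * 2 ^ n) : u n (m - 1) * u (n + 1) (2 * (m - 1)) = 0 := by
  have hF := hs.frontData_of_isWeakSol hu
  have hN0 : N0 ≤ n := by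
    rcases hs.eq_zero_or_eq_two with h0 | rfl
    · omega
    · have : 2 ^ N0 ≤ 2 ^ n := by nlinarith [Nat.one_le_two_pow (n := N0)]
      exact (Nat.pow_le_pow_iff_right one_lt_two).mp this
  obtain ⟨k, rfl⟩ := Nat.exists_eq_add_of_le hN0
  have hmK : m ≤ K * 2 ^ k := by
    refine Nat.le_of_mul_le_mul_right ?_ (Nat.two_pow_pos N0)
    calc m * 2 ^ N0 ≤ K * 2 ^ (N0 + k) := hT
      _ = K * 2 ^ k * 2 ^ N0 := by ring
  rcases Nat.eq_zero_or_pos k with rfl | hk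
  · obtain rfl : K = 2 := hs.eq_zero_or_eq_two.resolve_left (by omega)
    obtain rfl : m = 2 := by omega
    refine mul_eq_zero_of_left ?_ _
    rw [(hu.2.2 _ 1 hn le_rfl).eq_mul_of_odd rfl]
    exact mul_eq_zero_of_right _ ((hF 1).init_zero 1 le_rfl le_rfl)
  have hs2 : K * 2 ^ (k + 1) = 2 * (K * 2 ^ k) := by ring
  rcases Nat.lt_or_ge m (K * 2 ^ k) with hlt | hge
  · exact mul_eq_zero_of_right _ ((hF (k + 1)).eq_zero (k + 1) le_rfl _ (by omega))
  · obtain rfl : m = K * 2 ^ k := by omega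
    exact mul_eq_zero_of_left
      ((hF k).eq_zero_pred ((hF (k + 1)).eq_zero (k + 1) le_rfl _ (by omega)) hk le_rfl) _

theorem eq_of_isWeakSol (hs : BlowupSeed a b N0 K) (hu : IsWeakSol fB gB a b u)
    (hv : IsWeakSol fB gB a b v) :
    ∀ n m, 1 ≤ n → m * 2 ^ N0 ≤ K * 2 ^ n → u n m = v n m :=
  hu.eq_of_interaction_eq hv N0 K fun _ _ hn hm hT =>
    (hs.interaction_eq_zero hu hn hm hT).trans (hs.interaction_eq_zero hv hn hm hT).symm

theorem regField_ray (hs : BlowupSeed a b N0 K) {top : ℕ → ℕ → ZMod 2} (hD : 3 ≤ D)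
    (htop : top (N0 + D + 1) (K * 2 ^ (D + 1) - 4) = 0) :
    regField fB gB top (N0 + D) a b (N0 + 3) (K * 2 ^ 3 + 2) =
      top (N0 + D + 1) (K * 2 ^ (D + 1)) * top (N0 + D + 1) (K * 2 ^ (D + 1) + 2) := by
  have hlt : N0 + D < N0 + D + 1 := by omega
  rw [(hs.frontData_regField top D).ray_eq_top (by rwa [regField_of_lt hlt]) le_rfl hD,
    regField_of_lt hlt, regField_of_lt hlt]

theorem exists_isWeakSol_ne (hs : BlowupSeed a b N0 K) :
    ∃ u v : ℕ → ℕ → ZMod 2, IsWeakSol fB gB a b u ∧ IsWeakSol fB gB a b v ∧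
      ∃ n m : ℕ, 1 ≤ n ∧ K * 2 ^ n < m * 2 ^ N0 ∧ u n m ≠ v n m := by
  have hlim (top : ℕ → ℕ → ZMod 2) := exists_isWeakSol_of_eventually
    (w := fun N => regField fB gB top N a b) (fun _ m => regField_zero_left m)
    (fun _ _ h1 h2 => regField_zero_right h1 h2) (fun _ _ _ h1 h2 hm => idealEq_regField h1 h2 hm)
  have hray (top : ℕ → ℕ → ZMod 2) (c : ZMod 2)
      (htop : ∀ D, 3 ≤ D → top (N0 + D + 1) (K * 2 ^ (D + 1) - 4) = 0 ∧
        top (N0 + D + 1) (K * 2 ^ (D + 1)) * top (N0 + D + 1) (K * 2 ^ (D + 1) + 2) = c) :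
      ∀ᶠ N in atTop, regField fB gB top N a b (N0 + 3) (K * 2 ^ 3 + 2) = c := by
    filter_upwards [eventually_ge_atTop (N0 + 3)] with N hN
    obtain ⟨D, rfl⟩ := Nat.exists_eq_add_of_le (hN.trans' (Nat.le_add_right N0 3))
    rw [hs.regField_ray (by omega) (htop D (by omega)).1, (htop D (by omega)).2]
  obtain ⟨u, hu, hu_lim⟩ := hlim fun _ _ => 0
  obtain ⟨v, hv, hv_lim⟩ := hlim fun n m => if K * 2 ^ (n - N0) ≤ m then 1 else 0
  have hu0 := hu_lim _ _ 0 (hray _ 0 fun D _ => ⟨rfl, zero_mul 0⟩)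
  have hv1 := hv_lim _ _ 1 <| hray _ 1 fun D _ => by
    have := Nat.mul_le_mul hs.two_le (Nat.one_le_two_pow (n := D + 1))
    simp only [show N0 + D + 1 - N0 = D + 1 by omega]
    rw [if_neg (by omega), if_pos le_rfl, if_pos (by omega)]
    exact ⟨rfl, one_mul 1⟩
  refine ⟨u, v, hu, hv, N0 + 3, K * 2 ^ 3 + 2, by omega, ?_, by rw [hu0, hv1]; decide⟩
  calc K * 2 ^ (N0 + 3) = K * 2 ^ 3 * 2 ^ N0 := by ring
    _ < (K * 2 ^ 3 + 2) * 2 ^ N0 := Nat.mul_lt_mul_of_pos_right (by omega) (by positivity)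

end BlowupSeed

end ModelB

theorem tbc_eq_top {b : ℕ → ZMod 2} (hb : ∀ j, b j = 0) : tbc b = ⊤ := by
  simp [tbc, hb]

theorem tbc_eq_natCast {b : ℕ → ZMod 2} {k : ℕ} (hb : ∀ j < k, b j = 0) (hk : b k ≠ 0) :
    tbc b = k :=
  le_antisymm (sSup_le fun _ hs => not_lt.mp fun hlt => hk (hs k hlt))
    (le_sSup fun _ hj => hb _ (by exact_mod_cast hj))

theorem exists_blowupSeed {a b : ℕ → ZMod 2} {i : ℕ} {T : ℝ≥0∞}
    (hia : ∀ n, i < n → a (n - 1) = 0) (hia' : 1 ≤ i → a (i - 1) = 1)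
    (hT : T = if i = 0 then tbc b + 2 else 2 / 2 ^ i) (hTfin : T ≠ ⊤) :
    ∃ N0 K, BlowupSeed a b N0 K ∧ T = K / 2 ^ N0 := by
  rcases Nat.eq_zero_or_pos i with rfl | hi
  · rw [if_pos rfl] at hT
    have hb : ∃ j, b j ≠ 0 := by
      by_contra! hb
      exact hTfin (by rw [hT, tbc_eq_top hb, top_add])
    have hb1 : b (Nat.find hb) = 1 := by
      have : ∀ x : ZMod 2, x ≠ 0 → x = 1 := by decide
      exact this _ (Nat.find_spec hb)
    refine ⟨0, Nat.find hb + 2, .boundary _ (fun j => hia (j + 1) (by omega))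
      (fun j hj => not_not.mp (Nat.find_min hb hj)) hb1, ?_⟩
    rw [hT, tbc_eq_natCast (fun j hj => not_not.mp (Nat.find_min hb hj)) (Nat.find_spec hb)]
    push_cast
    rw [pow_zero, div_one]
  · obtain ⟨j, rfl⟩ := Nat.exists_eq_add_of_le' hi
    refine ⟨j + 1, 2, .initial j (fun n hn => hia (n + 1) (by omega)) (hia' (by omega)), ?_⟩
    rw [hT, if_neg (by omega)]
    norm_num

/-- Symbolic model B.  Let `a` have leading initial scale
number `i = n_max(0) < ∞`, and let the blowup time
`T = t_bc + 2` (if `i = 0`) or `T = 2^{1-i} = 2/2^i` (if `i ≥ 1`) be finite.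
Then: (i) any two weak solutions coincide at every lattice point `(n, t)` with
`t = m·τₙ ≤ T`; and (ii) there exist two weak solutions differing at some lattice
point with `t > T`. -/
theorem statement17 (a b : ℕ → ZMod 2) (i : ℕ)
    (hia : ∀ n, i < n → a (n - 1) = 0) (hia' : 1 ≤ i → a (i - 1) = 1)
    (T : ℝ≥0∞) (hT : T = if i = 0 then tbc b + 2 else 2 / 2 ^ i) (hTfin : T ≠ ⊤) :
    (∀ u v : ℕ → ℕ → ZMod 2, IsWeakSol fB gB a b u → IsWeakSol fB gB a b v →
      ∀ n m : ℕ, 1 ≤ n → (m : ℝ≥0∞) / 2 ^ n ≤ T → u n m = v n m) ∧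
    (∃ u v : ℕ → ℕ → ZMod 2, IsWeakSol fB gB a b u ∧ IsWeakSol fB gB a b v ∧
      ∃ n m : ℕ, 1 ≤ n ∧ T < (m : ℝ≥0∞) / 2 ^ n ∧ u n m ≠ v n m) := by
  obtain ⟨N0, K, hs, rfl⟩ := exists_blowupSeed hia hia' hT hTfin
  refine ⟨fun u v hu hv n m hn hle =>
    hs.eq_of_isWeakSol hu hv n m hn (natCast_div_two_pow_le_iff.mp hle), ?_⟩
  obtain ⟨u, v, hu, hv, n, m, hn, hlt, hne⟩ := hs.exists_isWeakSol_ne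
  exact ⟨u, v, hu, hv, n, m, hn,
    not_le.mp fun hle => (natCast_div_two_pow_le_iff.mp hle).not_gt hlt, hne⟩

end SSRG
end
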